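/- arXiv:0906.0437 — 7 statements merged into one kernel-verified Lean document; each statement's English description precedes it below -/
import Mathlib

section
/- Theorem 1, item (i) (dwell-time supervisor, uniform output bound). Consider supervisor data (M, (Δ_q), (β_q), (χ_q)) and a supervised output trajectory (y, v, (t_j), (q_j)) with disturbance bound v. Define β̄(s) := max_{0 ≤ q ≤ M} β_q(s, 0). Then for every t ≥ 0: y(t) ≤ β̄(max{2Δ_M, y(0)}) + v(t) + β_M(2·v(t), 0). -/
open Set Filter

/-- A class-`K` function: continuous, strictly increasing on `[0,∞)`, vanishing at `0`. -/
def ClassK (γ : ℝ → ℝ) : Prop :=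
  ContinuousOn γ (Ici 0) ∧ StrictMonoOn γ (Ici 0) ∧ γ 0 = 0

/-- A class-`KL` function: class `K` in the first argument for every fixed second argument
`t ≥ 0`, and (for every fixed `s > 0`) continuous, strictly decreasing and tending to `0`
at `+∞` in the second argument. -/
def ClassKL (β : ℝ → ℝ → ℝ) : Prop :=
  (∀ t ≥ (0:ℝ), ClassK (fun s => β s t)) ∧
  ∀ s > (0:ℝ), ContinuousOn (β s) (Ici 0) ∧ StrictAntiOn (β s) (Ici 0) ∧
    Tendsto (β s) atTop (nhds 0)

/-- Supervisor data: number of thresholds `M ≥ 1`, thresholds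
`0 = Δ 0 < Δ 1 < ⋯ < Δ M`, class-`KL` bounds `β q` with `β q s 0 > s` for `s > 0` and
`β q (Δ (q+1)) 0 ≤ Δ (q+2)` whenever `q+2 ≤ M`, and inverses `χ q` of `s ↦ β q s 0`. -/
structure SupervisorData where
  M : ℕ
  Δ : ℕ → ℝ
  β : ℕ → ℝ → ℝ → ℝ
  χ : ℕ → ℝ → ℝ
  hM : 1 ≤ M
  hΔ0 : Δ 0 = 0
  hΔlt : ∀ q < M, Δ q < Δ (q + 1)
  hβKL : ∀ q ≤ M, ClassKL (β q)
  hβgt : ∀ q ≤ M, ∀ s > (0:ℝ), s < β q s 0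
  hβΔ : ∀ q, q + 2 ≤ M → β q (Δ (q + 1)) 0 ≤ Δ (q + 2)
  hχ : ∀ q ≤ M, ∀ s ≥ (0:ℝ), 0 ≤ χ q s ∧ β q (χ q s) 0 = s

/-- A supervised output trajectory (dwell-time supervisor) with disturbance bound `v`:
a continuous nonnegative output `y` on `[0,∞)`, a nondecreasing nonnegative disturbance
bound `v`, switching times `t 0 = 0 < t 1 < ⋯` (finite with last index `N` when `N ≠ ⊤`,
in which case `t` is only constrained up to `N` and the last interval is `[t N, ∞)`;
infinite with `t j → ∞` when `N = ⊤`), and modes `q j ≤ M` with `q (j+1) ≠ q j`,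
satisfying the initial, switching and inter-switch SIIOS output conditions. -/
structure SupTraj (D : SupervisorData) where
  y : ℝ → ℝ
  v : ℝ → ℝ
  t : ℕ → ℝ
  q : ℕ → ℕ
  N : ℕ∞
  hy_cont : ContinuousOn y (Ici 0)
  hy_nonneg : ∀ s ≥ (0:ℝ), 0 ≤ y s
  hv_mono : MonotoneOn v (Ici 0)
  hv_nonneg : ∀ s ≥ (0:ℝ), 0 ≤ v s
  ht0 : t 0 = 0
  ht_lt : ∀ j : ℕ, ((j + 1 : ℕ) : ℕ∞) ≤ N → t j < t (j + 1)
  ht_top : N = ⊤ → Tendsto t atTop atTop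
  hq_le : ∀ j : ℕ, (j : ℕ∞) ≤ N → q j ≤ D.M
  hq_ne : ∀ j : ℕ, ((j + 1 : ℕ) : ℕ∞) ≤ N → q (j + 1) ≠ q j
  h_init_lo : D.Δ (q 0) ≤ y 0
  h_init_hi : q 0 < D.M → y 0 < D.Δ (q 0 + 1)
  h_switch_lt : ∀ j : ℕ, 1 ≤ j → (j : ℕ∞) ≤ N → q j < D.M →
    D.Δ (q j) ≤ y (t j) ∧ y (t j) ≤ D.χ (q j) (D.Δ (q j + 1))
  h_switch_top : ∀ j : ℕ, 1 ≤ j → (j : ℕ∞) ≤ N → q j = D.M →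
    D.Δ D.M ≤ y (t j) ∧ y (t j) ≤ D.Δ D.M + v (t j)
  h_bound : ∀ j : ℕ, (j : ℕ∞) ≤ N → ∀ s : ℝ, t j ≤ s →
    (((j + 1 : ℕ) : ℕ∞) ≤ N → s ≤ t (j + 1)) →
    y s ≤ D.β (q j) (y (t j)) (s - t j) + v s

/-!
On each switching interval `[t_j, t_{j+1}]` the mode-`q_j` estimate and the decay of `β_{q_j}` in
time give `y(t) ≤ β_{q_j}(y(t_j), 0) + v(t)`, so it suffices to bound `β_{q_j}(y(t_j), 0)` at
the switching times `t_j ≤ t`; write `C = max(2Δ_M, y(0))`. At `t_0 = 0` it is at most `β̄(C)`.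
After a switch to `q_j < M` the supervisor guarantees `y(t_j) ≤ χ_{q_j}(Δ_{q_j+1})`, hence
`β_{q_j}(y(t_j), 0) ≤ Δ_{q_j+1} ≤ Δ_M < C < β_M(C, 0) ≤ β̄(C)`. After a switch to `M` it
guarantees `y(t_j) ≤ Δ_M + v(t_j) ≤ max(2Δ_M, 2v(t))`, so `β_M(y(t_j), 0)` is at most
`max(β̄(C), β_M(2v(t), 0))`.
-/

namespace ClassK

variable {γ : ℝ → ℝ}

theorem monotoneOn (h : ClassK γ) : MonotoneOn γ (Ici 0) := h.2.1.monotoneOn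

theorem nonneg (h : ClassK γ) {a : ℝ} (ha : 0 ≤ a) : 0 ≤ γ a :=
  h.2.2 ▸ h.monotoneOn self_mem_Ici ha ha

end ClassK

namespace ClassKL

variable {β : ℝ → ℝ → ℝ}

theorem classK_zero (h : ClassKL β) : ClassK (fun s => β s 0) := h.1 0 le_rfl

theorem le_apply_zero (h : ClassKL β) {a τ : ℝ} (ha : 0 ≤ a) (hτ : 0 ≤ τ) :
    β a τ ≤ β a 0 := by
  have hβ0 : ∀ t ≥ (0:ℝ), β 0 t = 0 := fun t ht => (h.1 t ht).2.2
  rcases ha.eq_or_lt with rfl | ha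
  · rw [hβ0 τ hτ, hβ0 0 le_rfl]
  · exact (h.2 a ha).2.1.antitoneOn self_mem_Ici hτ hτ

end ClassKL

theorem MonotoneOn.apply_le_max_two_mul_of_le_add {f : ℝ → ℝ} (hf : MonotoneOn f (Ici 0))
    {x a b : ℝ} (hx : 0 ≤ x) (hxab : x ≤ a + b) : f x ≤ max (f (2 * a)) (f (2 * b)) := by
  rcases le_total a b with hab | hab
  · exact (hf hx (mem_Ici.2 (by linarith)) (by linarith)).trans (le_max_right _ _)
  · exact (hf hx (mem_Ici.2 (by linarith)) (by linarith)).trans (le_max_left _ _)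

namespace SupervisorData

variable (D : SupervisorData)

theorem Δ_monotoneOn : MonotoneOn D.Δ (Iic D.M) :=
  monotoneOn_of_le_succ ordConnected_Iic fun q _ _ hq =>
    (D.hΔlt q (Order.succ_le_iff.1 hq)).le

theorem Δ_nonneg {q : ℕ} (hq : q ≤ D.M) : 0 ≤ D.Δ q :=
  D.hΔ0 ▸ D.Δ_monotoneOn (mem_Iic.2 (Nat.zero_le _)) hq (Nat.zero_le q)

theorem Δ_M_pos : 0 < D.Δ D.M :=
  calc 0 = D.Δ 0 := D.hΔ0.symm
    _ < D.Δ 1 := D.hΔlt 0 D.hM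
    _ ≤ D.Δ D.M := D.Δ_monotoneOn D.hM (mem_Iic.2 le_rfl) D.hM

/-- The paper's `β̄ s = max_{0 ≤ q ≤ M} β_q(s, 0)`. -/
def βmax (s : ℝ) : ℝ :=
  (Finset.range (D.M + 1)).sup' (Finset.nonempty_range_iff.mpr (Nat.succ_ne_zero _))
    (fun q => D.β q s 0)

theorem β_le_βmax {q : ℕ} (hq : q ≤ D.M) (s : ℝ) : D.β q s 0 ≤ D.βmax s :=
  Finset.le_sup' (fun q => D.β q s 0) (Finset.mem_range_succ_iff.2 hq)

theorem lt_βmax {s : ℝ} (hs : 0 < s) : s < D.βmax s :=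
  (D.hβgt D.M le_rfl s hs).trans_le (D.β_le_βmax le_rfl s)

end SupervisorData

namespace SupTraj

variable {D : SupervisorData} (Tr : SupTraj D)

theorem t_nonneg {j : ℕ} (hj : (j : ℕ∞) ≤ Tr.N) : 0 ≤ Tr.t j := by
  induction j with
  | zero => exact Tr.ht0.ge
  | succ j ih =>
    exact (ih (le_trans (by exact_mod_cast j.le_succ) hj)).trans (Tr.ht_lt j hj).le

theorem exists_forall_lt_t (s : ℝ) : ∃ b : ℕ, ∀ k, b < k → (k : ℕ∞) ≤ Tr.N → s < Tr.t k := by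
  rcases eq_or_ne Tr.N ⊤ with hN | hN
  · obtain ⟨b, hb⟩ := eventually_atTop.1 ((Tr.ht_top hN).eventually_gt_atTop s)
    exact ⟨b, fun k hk _ => hb k hk.le⟩
  · obtain ⟨n, hn⟩ := ENat.ne_top_iff_exists.1 hN
    refine ⟨n, fun k hk hkN => absurd hkN ?_⟩
    rw [← hn, ENat.natCast_le_natCast]
    exact hk.not_ge

theorem exists_mem_switching_interval {s : ℝ} (hs : 0 ≤ s) :
    ∃ j : ℕ, (j : ℕ∞) ≤ Tr.N ∧ Tr.t j ≤ s ∧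
      (((j + 1 : ℕ) : ℕ∞) ≤ Tr.N → s ≤ Tr.t (j + 1)) := by
  classical
  obtain ⟨b, hb⟩ := Tr.exists_forall_lt_t s
  let P := fun k : ℕ => (k : ℕ∞) ≤ Tr.N ∧ Tr.t k ≤ s
  have hP0 : P 0 := ⟨by simp, Tr.ht0 ▸ hs⟩
  obtain ⟨hjN, hjs⟩ := Nat.findGreatest_spec (Nat.zero_le b) hP0
  refine ⟨Nat.findGreatest P b, hjN, hjs, fun hj1 => ?_⟩
  by_contra! hlt
  rcases le_or_gt (Nat.findGreatest P b + 1) b with hle | hgt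
  · exact Nat.findGreatest_is_greatest (Nat.lt_succ_self _) hle ⟨hj1, hlt.le⟩
  · exact (hb _ hgt hj1).not_gt hlt

variable {Tr}

theorem β_y_t_zero_le {C : ℝ} (hC : Tr.y 0 ≤ C) : D.β (Tr.q 0) (Tr.y 0) 0 ≤ D.βmax C := by
  have hq := Tr.hq_le 0 bot_le
  exact ((D.hβKL _ hq).classK_zero.monotoneOn (Tr.hy_nonneg 0 le_rfl)
    (mem_Ici.2 ((Tr.hy_nonneg 0 le_rfl).trans hC)) hC).trans (D.β_le_βmax hq C)

theorem β_y_t_le_Δ_M {j : ℕ} (hj : 1 ≤ j) (hjN : (j : ℕ∞) ≤ Tr.N) (hq : Tr.q j < D.M) :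
    D.β (Tr.q j) (Tr.y (Tr.t j)) 0 ≤ D.Δ D.M := by
  obtain ⟨-, hyχ⟩ := Tr.h_switch_lt j hj hjN hq
  obtain ⟨hχ_nonneg, hβχ⟩ := D.hχ (Tr.q j) hq.le _ (D.Δ_nonneg hq)
  calc D.β (Tr.q j) (Tr.y (Tr.t j)) 0 ≤ D.β (Tr.q j) (D.χ (Tr.q j) (D.Δ (Tr.q j + 1))) 0 :=
        (D.hβKL _ hq.le).classK_zero.monotoneOn (Tr.hy_nonneg _ (Tr.t_nonneg hjN))
          hχ_nonneg hyχ
    _ = D.Δ (Tr.q j + 1) := hβχ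
    _ ≤ D.Δ D.M := D.Δ_monotoneOn hq (mem_Iic.2 le_rfl) hq

theorem β_y_t_le_max {j : ℕ} (hj : 1 ≤ j) (hjN : (j : ℕ∞) ≤ Tr.N) (hq : Tr.q j = D.M) :
    D.β D.M (Tr.y (Tr.t j)) 0 ≤
      max (D.β D.M (2 * D.Δ D.M) 0) (D.β D.M (2 * Tr.v (Tr.t j)) 0) :=
  (D.hβKL D.M le_rfl).classK_zero.monotoneOn.apply_le_max_two_mul_of_le_add
    (Tr.hy_nonneg _ (Tr.t_nonneg hjN)) (Tr.h_switch_top j hj hjN hq).2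

theorem β_y_t_le {j : ℕ} (hjN : (j : ℕ∞) ≤ Tr.N) {s : ℝ} (hjs : Tr.t j ≤ s) :
    D.β (Tr.q j) (Tr.y (Tr.t j)) 0 ≤
      D.βmax (max (2 * D.Δ D.M) (Tr.y 0)) + D.β D.M (2 * Tr.v s) 0 := by
  set C := max (2 * D.Δ D.M) (Tr.y 0)
  have hβM := (D.hβKL D.M le_rfl).classK_zero
  have htj := Tr.t_nonneg hjN
  have hv_nonneg : 0 ≤ D.β D.M (2 * Tr.v s) 0 :=
    hβM.nonneg (by linarith [Tr.hv_nonneg s (htj.trans hjs)])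
  have hΔC : 2 * D.Δ D.M ≤ C := le_max_left _ _
  have hC_pos : 0 < C := lt_of_lt_of_le (by linarith [D.Δ_M_pos]) hΔC
  have hC_le : C ≤ D.βmax C := (D.lt_βmax hC_pos).le
  rcases j.eq_zero_or_pos with rfl | hj
  · rw [Tr.ht0]
    linarith [Tr.β_y_t_zero_le (le_max_right (2 * D.Δ D.M) (Tr.y 0))]
  rcases (Tr.hq_le j hjN).lt_or_eq with hq | hq
  · linarith [Tr.β_y_t_le_Δ_M hj hjN hq]
  have hΔ : D.β D.M (2 * D.Δ D.M) 0 ≤ D.βmax C :=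
    (hβM.monotoneOn (mem_Ici.2 (by linarith [D.Δ_M_pos])) hC_pos.le hΔC).trans
      (D.β_le_βmax le_rfl C)
  have hv : D.β D.M (2 * Tr.v (Tr.t j)) 0 ≤ D.β D.M (2 * Tr.v s) 0 :=
    hβM.monotoneOn (mem_Ici.2 (by linarith [Tr.hv_nonneg _ htj]))
      (mem_Ici.2 (by linarith [Tr.hv_nonneg _ (htj.trans hjs)]))
      (by linarith [Tr.hv_mono (mem_Ici.2 htj) (mem_Ici.2 (htj.trans hjs)) hjs])
  rw [hq]
  calc _ ≤ _ := Tr.β_y_t_le_max hj hjN hq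
    _ ≤ max (D.βmax C) (D.β D.M (2 * Tr.v s) 0) := max_le_max hΔ hv
    _ ≤ _ := max_le_add_of_nonneg (by linarith) hv_nonneg

end SupTraj

/-- **Theorem 1(i)** (dwell-time supervisor, uniform output bound):
for every `t ≥ 0`, `y t ≤ β̄ (max (2 Δ_M) (y 0)) + v t + β_M (2 v t) 0`,
where `β̄ s = max_{0 ≤ q ≤ M} β q s 0`. -/
theorem thm1_i (D : SupervisorData) (Tr : SupTraj D) :
    ∀ s ≥ (0:ℝ),
      Tr.y s ≤
        (Finset.range (D.M + 1)).sup'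
            (Finset.nonempty_range_iff.mpr (Nat.succ_ne_zero _))
            (fun q => D.β q (max (2 * D.Δ D.M) (Tr.y 0)) 0)
          + Tr.v s + D.β D.M (2 * Tr.v s) 0 := by
  intro s hs
  obtain ⟨j, hjN, hjs, hsj⟩ := Tr.exists_mem_switching_interval hs
  have hdecay : D.β (Tr.q j) (Tr.y (Tr.t j)) (s - Tr.t j) ≤ D.β (Tr.q j) (Tr.y (Tr.t j)) 0 :=
    (D.hβKL _ (Tr.hq_le j hjN)).le_apply_zero (Tr.hy_nonneg _ (Tr.t_nonneg hjN))
      (sub_nonneg.2 hjs)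
  calc Tr.y s ≤ D.β (Tr.q j) (Tr.y (Tr.t j)) (s - Tr.t j) + Tr.v s :=
        Tr.h_bound j hjN s hjs hsj
    _ ≤ D.β (Tr.q j) (Tr.y (Tr.t j)) 0 + Tr.v s := by gcongr
    _ ≤ D.βmax (max (2 * D.Δ D.M) (Tr.y 0)) + D.β D.M (2 * Tr.v s) 0 + Tr.v s := by
      gcongr
      exact Tr.β_y_t_le hjN hjs
    _ = _ := add_right_comm _ _ _
end

section
/- Theorem 2, item (i) (hysteresis supervisor, uniform output bound). Consider supervisor data (M, (Δ_q), (β_q), (χ_q)) and a hysteresis-supervised output trajectory (y, v, (t_j), (q_j)) with disturbance bound v. Define β̄(s) := max_{0 ≤ q ≤ M} β_q(s, 0). Then for every t ≥ 0: y(t) ≤ β̄(max{Δ_M, y(0)}) + v(t). -/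
open Set Filter

/-- A hysteresis-supervised output trajectory with disturbance bound `v`:
a continuous nonnegative output `y` on `[0,∞)`, a nondecreasing nonnegative disturbance
bound `v`, switching times `t 0 = 0 < t 1 < ⋯` (finite with last index `N` when `N ≠ ⊤`,
in which case `t` is only constrained up to `N` and the last interval is `[t N, ∞)`;
infinite with `t j → ∞` when `N = ⊤`), and modes `q j ≤ M` switching only to adjacent modes (`q (j+1) = q j ± 1`),
satisfying the initial, switching and inter-switch SIIOS output conditions. -/
structure HysTraj (D : SupervisorData) where
  y : ℝ → ℝ
  v : ℝ → ℝ
  t : ℕ → ℝ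
  q : ℕ → ℕ
  N : ℕ∞
  hy_cont : ContinuousOn y (Ici 0)
  hy_nonneg : ∀ s ≥ (0:ℝ), 0 ≤ y s
  hv_mono : MonotoneOn v (Ici 0)
  hv_nonneg : ∀ s ≥ (0:ℝ), 0 ≤ v s
  ht0 : t 0 = 0
  ht_lt : ∀ j : ℕ, ((j + 1 : ℕ) : ℕ∞) ≤ N → t j < t (j + 1)
  ht_top : N = ⊤ → Tendsto t atTop atTop
  hq_le : ∀ j : ℕ, (j : ℕ∞) ≤ N → q j ≤ D.M
  hq_adj : ∀ j : ℕ, ((j + 1 : ℕ) : ℕ∞) ≤ N → q (j + 1) = q j + 1 ∨ q (j + 1) + 1 = q j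
  h_init_lo : D.Δ (q 0) ≤ y 0
  h_init_hi : q 0 < D.M → y 0 < D.Δ (q 0 + 1)
  h_switch_lt : ∀ j : ℕ, 1 ≤ j → (j : ℕ∞) ≤ N → q j < D.M →
    D.Δ (q j) ≤ y (t j) ∧ y (t j) ≤ D.χ (q j) (D.Δ (q j + 1))
  h_switch_top : ∀ j : ℕ, 1 ≤ j → (j : ℕ∞) ≤ N → q j = D.M →
    y (t j) = D.Δ D.M
  h_bound : ∀ j : ℕ, (j : ℕ∞) ≤ N → ∀ s : ℝ, t j ≤ s →
    (((j + 1 : ℕ) : ℕ∞) ≤ N → s ≤ t (j + 1)) →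
    y s ≤ D.β (q j) (y (t j)) (s - t j) + v s

/-! Between two switching times the output is bounded by `β_q (y(t_j), 0) + v(t)`, because
`β_q` decreases in time. So it suffices that `y(t_j) ≤ max Δ_M y(0)` at every switching time:
at `t_0` this is trivial, on entry into the top mode `y(t_j) = Δ_M`, and on entry into a lower
mode `y(t_j) ≤ χ_q(Δ_{q+1}) < Δ_{q+1} ≤ Δ_M`, since the inverse of a map above the identity
lies below it. -/

theorem Nat.exists_and_not_succ {P : ℕ → Prop} (h0 : P 0) (hex : ∃ n, ¬ P n) :
    ∃ j, P j ∧ ¬ P (j + 1) := by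
  by_contra! h
  obtain ⟨n, hn⟩ := hex
  exact hn (Nat.rec h0 h n)

namespace ClassKL

variable {β : ℝ → ℝ → ℝ}

theorem apply_zero_left (hβ : ClassKL β) {τ : ℝ} (hτ : 0 ≤ τ) : β 0 τ = 0 :=
  (hβ.1 τ hτ).2.2

theorem le_apply_zero_right (hβ : ClassKL β) {u τ : ℝ} (hu : 0 ≤ u) (hτ : 0 ≤ τ) :
    β u τ ≤ β u 0 := by
  rcases hu.eq_or_lt with rfl | hu
  · rw [hβ.apply_zero_left hτ, hβ.apply_zero_left le_rfl]
  · exact (hβ.2 u hu).2.1.antitoneOn self_mem_Ici hτ hτ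

theorem monotoneOn_apply_zero_right (hβ : ClassKL β) : MonotoneOn (β · 0) (Ici 0) :=
  (hβ.1 0 le_rfl).2.1.monotoneOn

theorem lt_of_apply_zero_right_eq (hβ : ClassKL β) (hgt : ∀ s > 0, s < β s 0) {c x : ℝ}
    (hc : 0 ≤ c) (hx : 0 < x) (hcx : β c 0 = x) : c < x := by
  rcases hc.eq_or_lt with rfl | hc
  · rw [hβ.apply_zero_left le_rfl] at hcx
    linarith
  · exact hcx ▸ hgt c hc

end ClassKL

namespace SupervisorData

variable (D : SupervisorData)

theorem Δ_strictMonoOn : StrictMonoOn D.Δ (Iic D.M) :=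
  strictMonoOn_Iic_of_lt_succ fun q hq => by
    simpa only [Order.succ_eq_add_one] using D.hΔlt q hq

theorem Δ_le_Δ_M {q : ℕ} (hq : q ≤ D.M) : D.Δ q ≤ D.Δ D.M :=
  D.Δ_strictMonoOn.monotoneOn hq (mem_Iic.mpr le_rfl) hq

theorem Δ_succ_pos {q : ℕ} (hq : q < D.M) : 0 < D.Δ (q + 1) :=
  D.hΔ0 ▸ D.Δ_strictMonoOn (Nat.zero_le _) (show q + 1 ≤ D.M from hq) q.succ_pos

theorem χ_Δ_succ_lt_Δ_succ {q : ℕ} (hq : q < D.M) :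
    D.χ q (D.Δ (q + 1)) < D.Δ (q + 1) := by
  obtain ⟨hχ_nonneg, hχ_inv⟩ := D.hχ q hq.le _ (D.Δ_succ_pos hq).le
  exact (D.hβKL q hq.le).lt_of_apply_zero_right_eq (D.hβgt q hq.le) hχ_nonneg
    (D.Δ_succ_pos hq) hχ_inv

end SupervisorData

namespace HysTraj

variable {D : SupervisorData} (Tr : HysTraj D)

theorem t_nonneg {j : ℕ} (hj : (j : ℕ∞) ≤ Tr.N) : 0 ≤ Tr.t j := by
  induction j with
  | zero => exact Tr.ht0.ge
  | succ j ih =>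
    exact (ih (le_trans (by exact_mod_cast j.le_succ) hj)).trans (Tr.ht_lt j hj).le

theorem y_t_le_max {j : ℕ} (hj : (j : ℕ∞) ≤ Tr.N) :
    Tr.y (Tr.t j) ≤ max (D.Δ D.M) (Tr.y 0) := by
  rcases j.eq_zero_or_pos with rfl | hj1
  · rw [Tr.ht0]
    exact le_max_right _ _
  rcases (Tr.hq_le j hj).lt_or_eq with hlt | heq
  · calc Tr.y (Tr.t j) ≤ D.χ (Tr.q j) (D.Δ (Tr.q j + 1)) :=
          (Tr.h_switch_lt j hj1 hj hlt).2
      _ ≤ D.Δ (Tr.q j + 1) := (D.χ_Δ_succ_lt_Δ_succ hlt).le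
      _ ≤ D.Δ D.M := D.Δ_le_Δ_M hlt
      _ ≤ _ := le_max_left _ _
  · rw [Tr.h_switch_top j hj1 hj heq]
    exact le_max_left _ _

theorem exists_not_le_N_and_t_le (s : ℝ) :
    ∃ n : ℕ, ¬ ((n : ℕ∞) ≤ Tr.N ∧ Tr.t n ≤ s) := by
  cases hN : Tr.N with
  | top =>
    obtain ⟨n, hn⟩ := ((Tr.ht_top hN).eventually_gt_atTop s).exists
    exact ⟨n, fun h => h.2.not_gt hn⟩
  | coe N =>
    exact ⟨N + 1, fun h => N.not_succ_le_self (by exact_mod_cast h.1)⟩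

theorem exists_switch_interval {s : ℝ} (hs : 0 ≤ s) :
    ∃ j : ℕ, (j : ℕ∞) ≤ Tr.N ∧ Tr.t j ≤ s ∧
      (((j + 1 : ℕ) : ℕ∞) ≤ Tr.N → s ≤ Tr.t (j + 1)) := by
  obtain ⟨j, ⟨hjN, htj⟩, hnext⟩ :=
    Nat.exists_and_not_succ (P := fun n => (n : ℕ∞) ≤ Tr.N ∧ Tr.t n ≤ s)
      ⟨by simp, Tr.ht0 ▸ hs⟩ (Tr.exists_not_le_N_and_t_le s)
  exact ⟨j, hjN, htj, fun h => le_of_not_gt fun hlt => hnext ⟨h, hlt.le⟩⟩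

theorem y_le_β_max_add_v {j : ℕ} (hjN : (j : ℕ∞) ≤ Tr.N) {s : ℝ} (htj : Tr.t j ≤ s)
    (hnext : ((j + 1 : ℕ) : ℕ∞) ≤ Tr.N → s ≤ Tr.t (j + 1)) :
    Tr.y s ≤ D.β (Tr.q j) (max (D.Δ D.M) (Tr.y 0)) 0 + Tr.v s := by
  have hβ := D.hβKL (Tr.q j) (Tr.hq_le j hjN)
  have hy_nonneg := Tr.hy_nonneg _ (Tr.t_nonneg hjN)
  calc Tr.y s ≤ D.β (Tr.q j) (Tr.y (Tr.t j)) (s - Tr.t j) + Tr.v s :=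
        Tr.h_bound j hjN s htj hnext
    _ ≤ D.β (Tr.q j) (Tr.y (Tr.t j)) 0 + Tr.v s := by
      gcongr
      exact hβ.le_apply_zero_right hy_nonneg (sub_nonneg.mpr htj)
    _ ≤ D.β (Tr.q j) (max (D.Δ D.M) (Tr.y 0)) 0 + Tr.v s := by
      gcongr
      exact hβ.monotoneOn_apply_zero_right hy_nonneg (hy_nonneg.trans (Tr.y_t_le_max hjN))
        (Tr.y_t_le_max hjN)

end HysTraj

/-- **Theorem 2(i)** (hysteresis supervisor, uniform output bound):
for every `t ≥ 0`, `y t ≤ β̄ (max Δ_M (y 0)) + v t`, where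
`β̄ s = max_{0 ≤ q ≤ M} β q s 0`. -/
theorem thm2_i (D : SupervisorData) (Tr : HysTraj D) :
    ∀ s ≥ (0:ℝ),
      Tr.y s ≤
        (Finset.range (D.M + 1)).sup'
            (Finset.nonempty_range_iff.mpr (Nat.succ_ne_zero _))
            (fun q => D.β q (max (D.Δ D.M) (Tr.y 0)) 0)
          + Tr.v s := by
  intro s hs
  obtain ⟨j, hjN, htj, hnext⟩ := Tr.exists_switch_interval hs
  calc Tr.y s ≤ D.β (Tr.q j) (max (D.Δ D.M) (Tr.y 0)) 0 + Tr.v s :=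
        Tr.y_le_β_max_add_v hjN htj hnext
    _ ≤ _ := by
      gcongr
      exact Finset.le_sup' (fun q => D.β q (max (D.Δ D.M) (Tr.y 0)) 0)
        (Finset.mem_range_succ_iff.mpr (Tr.hq_le j hjN))
end

section
/- Corollary 1 (convergence-time estimate for the dwell-time supervisor). Consider supervisor data and a supervised output trajectory (y, v, (t_j), (q_j)) with v ≡ 0. Let dwell-time functions be given as follows: a constant T_0 > 0 with β_0(Δ_1, T_0) = Δ_1/2; and, for 1 ≤ q ≤ M, T_q defined on [Δ_q, Δ_{q+1}) (on [Δ_M, ∞) for q = M) by β_q(s, T_q(s)) = χ_{q−1}(Δ_q) (well defined since 0 < χ_{q−1}(Δ_q) < Δ_q ≤ s < β_q(s,0) and β_q(s,·) decreases continuously to 0). Assume the trajectory descends through consecutive modes as guaranteed by the supervisor's construction: the switching sequence is finite with last mode q_N = 0, and for every j < N one has q_{j+1} = q_j − 1 and t_{j+1} − t_j ≤ T_{q_j}(y(t_j)). Then the time T_{Δ₁/2} := inf{ t ≥ 0 : y(t) ≤ Δ_1/2 } satisfies T_{Δ₁/2} ≤ T_{q_0}(y(0)) + Σ_{k=0}^{q_0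 − 1} T̄_k, where T̄_0 := T_0 and, for k ≥ 1, T̄_k := sup_{Δ_k ≤ s < Δ_{k+1}} T_k(s) (a finite quantity). -/
open Set Filter

/-- **Corollary 1** (convergence-time estimate for the dwell-time supervisor):
with no disturbances (`v ≡ 0`), dwell-time functions `T q` defined by
`β 0 (Δ 1) T₀ = Δ 1 / 2` (with `T 0` constant equal to `T₀ > 0`) and
`β q s (T q s) = χ (q-1) (Δ q)` on `[Δ q, Δ (q+1))` (on `[Δ M, ∞)` for `q = M`),
and a finite switching sequence that descends through consecutive modes
(`q (j+1) = q j − 1`, last mode `0`) with interswitch times at most `T (q j) (y (t j))`,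
the time of convergence into `{y ≤ Δ 1 / 2}` is at most
`T (q 0) (y 0) + ∑_{k=0}^{q 0 − 1} T̄ k`, where `T̄ 0 = T₀` and
`T̄ k = sup_{Δ k ≤ s < Δ (k+1)} T k s` (finite by assumption). -/
theorem cor1 (D : SupervisorData) (Tr : SupTraj D)
    (hv : ∀ s : ℝ, Tr.v s = 0)
    (T0 : ℝ) (hT0pos : 0 < T0) (hT0eq : D.β 0 (D.Δ 1) T0 = D.Δ 1 / 2)
    (T : ℕ → ℝ → ℝ) (hT0' : ∀ s : ℝ, T 0 s = T0)
    (hT : ∀ q : ℕ, 1 ≤ q → q ≤ D.M → ∀ s : ℝ, D.Δ q ≤ s → (q < D.M → s < D.Δ (q + 1)) →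
      0 ≤ T q s ∧ D.β q s (T q s) = D.χ (q - 1) (D.Δ q))
    (hTbdd : ∀ k : ℕ, 1 ≤ k → k ≤ D.M →
      BddAbove {r : ℝ | ∃ s : ℝ, D.Δ k ≤ s ∧ s < D.Δ (k + 1) ∧ r = T k s})
    (Nfin : ℕ) (hN : Tr.N = (Nfin : ℕ∞))
    (hlast : Tr.q Nfin = 0)
    (hdesc : ∀ j : ℕ, j < Nfin → Tr.q j = Tr.q (j + 1) + 1)
    (hstep : ∀ j : ℕ, j < Nfin → Tr.t (j + 1) - Tr.t j ≤ T (Tr.q j) (Tr.y (Tr.t j))) :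
    sInf {s : ℝ | 0 ≤ s ∧ Tr.y s ≤ D.Δ 1 / 2} ≤
      T (Tr.q 0) (Tr.y 0) +
        ∑ k ∈ Finset.range (Tr.q 0),
          (if k = 0 then T0
           else sSup {r : ℝ | ∃ s : ℝ, D.Δ k ≤ s ∧ s < D.Δ (k + 1) ∧ r = T k s}) := by
  -- basic cast facts
  have hcast : ∀ j : ℕ, j ≤ Nfin → ((j : ℕ∞) ≤ Tr.N) := by
    intro j hj; rw [hN]; exact_mod_cast hj
  -- mode arithmetic
  have hqj : ∀ j, j ≤ Nfin → Tr.q j + j = Tr.q 0 := by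
    intro j hj
    induction j with
    | zero => rfl
    | succ j ih =>
      have h1 := hdesc j (by omega)
      have h2 := ih (by omega)
      omega
  have hq0 : Tr.q 0 = Nfin := by
    have := hqj Nfin le_rfl; rw [hlast] at this; omega
  have hq0M : Tr.q 0 ≤ D.M := Tr.hq_le 0 (hcast 0 (Nat.zero_le _))
  have hqval : ∀ j, j ≤ Nfin → Tr.q j = Nfin - j := by
    intro j hj; have := hqj j hj; omega
  -- nonnegativity of switching times
  have ht_nonneg : ∀ j, j ≤ Nfin → 0 ≤ Tr.t j := by
    intro j hj
    induction j with
    | zero => rw [Tr.ht0]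
    | succ j ih =>
      have h1 := Tr.ht_lt j (hcast (j + 1) hj)
      have h2 := ih (by omega)
      linarith
  -- positive thresholds
  have hΔpos : ∀ k, 1 ≤ k → k ≤ D.M → 0 < D.Δ k := by
    intro k h1 h2
    induction k with
    | zero => omega
    | succ k ih =>
      have hlt := D.hΔlt k (by omega)
      by_cases hk : k = 0
      · subst hk; rw [D.hΔ0] at hlt; exact hlt
      · have := ih (by omega) (by omega); linarith
  -- χ k s < s for s > 0
  have hχlt : ∀ k, k ≤ D.M → ∀ s : ℝ, 0 < s → D.χ k s < s := by
    intro k hk s hs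
    obtain ⟨hc0, hceq⟩ := D.hχ k hk s hs.le
    rcases eq_or_lt_of_le hc0 with h | h
    · exfalso
      have h00 : D.β k 0 0 = 0 := ((D.hβKL k hk).1 0 le_rfl).2.2
      rw [← h, h00] at hceq; linarith
    · have hgt := D.hβgt k hk _ h
      rw [hceq] at hgt; exact hgt
  -- final mode output bound: y (t Nfin) ≤ Δ 1
  have hyN : Tr.y (Tr.t Nfin) ≤ D.Δ 1 := by
    rcases Nat.eq_zero_or_pos Nfin with h | h
    · have hM1 := D.hM
      have hi := Tr.h_init_hi (by omega)
      rw [h, Tr.ht0]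
      have : Tr.q 0 = 0 := by omega
      rw [this] at hi; linarith [hi]
    · obtain ⟨_, hhi⟩ := Tr.h_switch_lt Nfin h (hcast Nfin le_rfl)
        (by rw [hlast]; exact D.hM)
      rw [hlast] at hhi
      have := hχlt 0 (by omega) (D.Δ 1) (hΔpos 1 le_rfl D.hM)
      linarith
  -- the candidate convergence time
  set s' : ℝ := Tr.t Nfin + T0 with hs'
  have hs'nonneg : 0 ≤ s' := by
    have := ht_nonneg Nfin le_rfl; rw [hs']; linarith
  -- y s' ≤ Δ 1 / 2
  have hys' : Tr.y s' ≤ D.Δ 1 / 2 := by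
    have hbnd := Tr.h_bound Nfin (hcast Nfin le_rfl) s' (by rw [hs']; linarith)
      (by
        intro hcon
        exfalso
        rw [hN] at hcon
        have : Nfin + 1 ≤ Nfin := by exact_mod_cast hcon
        omega)
    rw [hlast, hv] at hbnd
    have hdt : s' - Tr.t Nfin = T0 := by rw [hs']; ring
    rw [hdt] at hbnd
    have hK := (D.hβKL 0 (by omega)).1 T0 hT0pos.le
    have hmono : MonotoneOn (fun s => D.β 0 s T0) (Ici 0) := hK.2.1.monotoneOn
    have hy0' : (0:ℝ) ≤ Tr.y (Tr.t Nfin) := Tr.hy_nonneg _ (ht_nonneg Nfin le_rfl)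
    have hΔ1 : (0:ℝ) ≤ D.Δ 1 := (hΔpos 1 le_rfl D.hM).le
    have := hmono (mem_Ici.mpr hy0') (mem_Ici.mpr hΔ1) hyN
    simp only [] at this
    rw [hT0eq] at this
    linarith
  -- termwise bound for intermediate modes
  have hterm : ∀ i, 1 ≤ i → i < Nfin →
      Tr.t (i + 1) - Tr.t i ≤
        sSup {r : ℝ | ∃ s : ℝ, D.Δ (Tr.q i) ≤ s ∧ s < D.Δ (Tr.q i + 1) ∧ r = T (Tr.q i) s} := by
    intro i h1 h2
    have hqi := hqval i h2.le
    have hqi1 : 1 ≤ Tr.q i := by omega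
    have hqiM : Tr.q i < D.M := by omega
    obtain ⟨hlo, hhi⟩ := Tr.h_switch_lt i h1 (hcast i h2.le) hqiM
    have hhi' : Tr.y (Tr.t i) < D.Δ (Tr.q i + 1) := by
      have := hχlt (Tr.q i) (by omega) (D.Δ (Tr.q i + 1))
        (hΔpos (Tr.q i + 1) (by omega) (by omega))
      linarith
    have hmemS : T (Tr.q i) (Tr.y (Tr.t i)) ∈
        {r : ℝ | ∃ s : ℝ, D.Δ (Tr.q i) ≤ s ∧ s < D.Δ (Tr.q i + 1) ∧ r = T (Tr.q i) s} :=
      ⟨Tr.y (Tr.t i), hlo, hhi', rfl⟩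
    have hle := le_csSup (hTbdd (Tr.q i) hqi1 (by omega)) hmemS
    have hst := hstep i h2
    linarith
  -- total time bound
  have htotal : s' ≤ T (Tr.q 0) (Tr.y 0) +
      ∑ k ∈ Finset.range (Tr.q 0),
        (if k = 0 then T0
         else sSup {r : ℝ | ∃ s : ℝ, D.Δ k ≤ s ∧ s < D.Δ (k + 1) ∧ r = T k s}) := by
    rw [hq0]
    rcases Nat.eq_zero_or_pos Nfin with h | h
    · subst h
      simp only [Finset.range_zero, Finset.sum_empty]
      rw [hs', Tr.ht0, hT0']
      linarith
    · obtain ⟨n, rfl⟩ : ∃ n, Nfin = n + 1 := ⟨Nfin - 1, by omega⟩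
      have htel : Tr.t (n + 1) = ∑ j ∈ Finset.range (n + 1), (Tr.t (j + 1) - Tr.t j) := by
        rw [Finset.sum_range_sub, Tr.ht0]; ring
      have hd0 : Tr.t 1 - Tr.t 0 ≤ T (n + 1) (Tr.y 0) := by
        have h0 := hstep 0 (by omega)
        rw [hq0, Tr.ht0] at h0
        rw [Tr.ht0]
        simpa using h0
      have hmid : ∑ j ∈ Finset.range n, (Tr.t (j + 1 + 1) - Tr.t (j + 1)) ≤
          ∑ j ∈ Finset.range n,
            sSup {r : ℝ | ∃ s : ℝ, D.Δ (j + 1) ≤ s ∧ s < D.Δ (j + 1 + 1) ∧ r = T (j + 1) s} := by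
        rw [← Finset.sum_range_reflect (fun j => Tr.t (j + 1 + 1) - Tr.t (j + 1)) n]
        apply Finset.sum_le_sum
        intro j hj
        have hjn : j < n := Finset.mem_range.mp hj
        have hieq : n - 1 - j + 1 = n - j := by omega
        rw [hieq]
        have h1 : 1 ≤ n - j := by omega
        have h2 : n - j < n + 1 := by omega
        have hq' : Tr.q (n - j) = j + 1 := by
          have := hqval (n - j) (by omega); omega
        have hh := hterm (n - j) h1 h2
        rw [hq'] at hh
        exact hh
      have hsum_eq : (∑ k ∈ Finset.range (n + 1),
          (if k = 0 then T0
           else sSup {r : ℝ | ∃ s : ℝ, D.Δ k ≤ s ∧ s < D.Δ (k + 1) ∧ r = T k s})) =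
          (∑ j ∈ Finset.range n,
            sSup {r : ℝ | ∃ s : ℝ, D.Δ (j + 1) ≤ s ∧ s < D.Δ (j + 1 + 1) ∧ r = T (j + 1) s}) + T0 := by
        rw [Finset.sum_range_succ']
        simp
      rw [hsum_eq, hs', htel, Finset.sum_range_succ']
      simp only [Nat.zero_add]
      linarith [hd0, hmid]
  -- conclude via sInf
  have hbddb : BddBelow {s : ℝ | 0 ≤ s ∧ Tr.y s ≤ D.Δ 1 / 2} :=
    ⟨0, fun x hx => hx.1⟩
  have hmem : s' ∈ {s : ℝ | 0 ≤ s ∧ Tr.y s ≤ D.Δ 1 / 2} := ⟨hs'nonneg, hys'⟩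
  calc sInf {s : ℝ | 0 ≤ s ∧ Tr.y s ≤ D.Δ 1 / 2} ≤ s' := csInf_le hbddb hmem
    _ ≤ _ := htotal
end

section
/- Corollary 3 (convergence-time estimate for the hysteresis supervisor). Consider supervisor data and a hysteresis-supervised output trajectory (y, v, (t_j), (q_j)) with v ≡ 0 and q_0 < M. Let dwell-time functions be given as follows: a constant T_0 > 0 with β_0(Δ_1, T_0) = Δ_1/2; and, for 1 ≤ q ≤ M, T_q defined on [Δ_q, Δ_{q+1}) (on [Δ_M, ∞) for q = M) by β_q(s, T_q(s)) = χ_{q−1}(Δ_q). Assume the switching sequence is finite with last mode q_N = 0, that t_{j+1} − t_j ≤ T_{q_j}(y(t_j)) for every j < N, and that either (no upward switch) q_{j+1} = q_j − 1 for every j < N, or (one initial upward switch) q_1 = q_0 + 1 with y(t_1) = Δ_{q_0+1} and q_{j+1} = q_j − 1 for every 1 ≤ j < N. Then the time T_{Δ₁/2} := inf{ t ≥ 0 : y(t) ≤ Δ_1/2 } satisfies T_{Δ₁/2} ≤ T_{q_0}(y(0)) + T_{q_0+1}(Δ_{q_0+1}) + Σ_{k=0}^{q_0} T̄_k, where T̄_0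 := T_0 and, for k ≥ 1, T̄_k := sup_{Δ_k ≤ s < Δ_{k+1}} T_k(s) (a finite quantity). -/
/-!
Once the supervisor has settled in mode `0` at the last switching time `t N`, the output lies
below `Δ 1`, so the `KL` bound of mode `0` brings it under `Δ 1 / 2` within `T₀`. The time `t N`
itself telescopes into the dwell times: the first one (and, after an upward switch, the second)
is kept as it is, and the remaining switches descend one mode at a time to `0`, so they visit each
mode `k ∈ [1, q 0]` at most once. Since at a switching time the output lies in the band
`[Δ q, Δ (q + 1))` of the current mode, each such dwell time is at most `T̄ k`.
-/

open Set Filter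

theorem ClassKL.mono_left {β : ℝ → ℝ → ℝ} (hβ : ClassKL β) {τ a b : ℝ} (hτ : 0 ≤ τ)
    (ha : 0 ≤ a) (hab : a ≤ b) : β a τ ≤ β b τ :=
  (hβ.1 τ hτ).2.1.monotoneOn ha (ha.trans hab) hab

theorem ClassKL.apply_zero_left_s5 {β : ℝ → ℝ → ℝ} (hβ : ClassKL β) {τ : ℝ} (hτ : 0 ≤ τ) :
    β 0 τ = 0 :=
  (hβ.1 τ hτ).2.2

theorem Nat.eq_sub_of_forall_eq_succ_add_one {f : ℕ → ℕ} {a n : ℕ}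
    (hf : ∀ j, a ≤ j → j < n → f j = f (j + 1) + 1) (hn : f n = 0) {j : ℕ} (hja : a ≤ j)
    (hjn : j ≤ n) : f j = n - j := by
  induction hjn using Nat.decreasingInduction with
  | self => simpa using hn
  | of_succ j hj ih => rw [hf j hja hj, ih (by omega)]; omega

theorem le_sum_range_of_sub_le {t τ : ℕ → ℝ} {n : ℕ} (ht0 : t 0 = 0)
    (h : ∀ j < n, t (j + 1) - t j ≤ τ j) : t n ≤ ∑ j ∈ Finset.range n, τ j := by
  rw [← sub_zero (t n), ← ht0, ← Finset.sum_range_sub]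
  exact Finset.sum_le_sum fun j hj => h j (Finset.mem_range.mp hj)

namespace SupervisorData

variable (D : SupervisorData)

theorem Δ_pos {k : ℕ} (h1 : 1 ≤ k) (hk : k ≤ D.M) : 0 < D.Δ k := by
  induction k, h1 using Nat.le_induction with
  | base => simpa [D.hΔ0] using D.hΔlt 0 hk
  | succ k _ ih => exact (ih (by omega)).trans (D.hΔlt k hk)

theorem χ_lt {q : ℕ} (hq : q ≤ D.M) {s : ℝ} (hs : 0 < s) : D.χ q s < s := by
  obtain ⟨hχ_nonneg, hχ_inv⟩ := D.hχ q hq s hs.le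
  have hχ_pos : 0 < D.χ q s := by
    refine hχ_nonneg.lt_of_ne fun h => hs.ne ?_
    rw [← hχ_inv, ← h, (D.hβKL q hq).apply_zero_left_s5 le_rfl]
  simpa [hχ_inv] using D.hβgt q hq _ hχ_pos

/-- The quantity `T̄ k` of the paper. -/
noncomputable def dwellBound (T0 : ℝ) (T : ℕ → ℝ → ℝ) (k : ℕ) : ℝ :=
  if k = 0 then T0 else sSup {r : ℝ | ∃ s : ℝ, D.Δ k ≤ s ∧ s < D.Δ (k + 1) ∧ r = T k s}

variable {D} {T0 : ℝ} {T : ℕ → ℝ → ℝ}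

theorem le_dwellBound {k : ℕ} (hk : k ≠ 0)
    (hbdd : BddAbove {r : ℝ | ∃ s : ℝ, D.Δ k ≤ s ∧ s < D.Δ (k + 1) ∧ r = T k s}) {s : ℝ}
    (hs : s ∈ Ico (D.Δ k) (D.Δ (k + 1))) : T k s ≤ D.dwellBound T0 T k := by
  rw [dwellBound, if_neg hk]
  exact le_csSup hbdd ⟨s, hs.1, hs.2, rfl⟩

theorem dwellBound_nonneg {k : ℕ} (hk : k ≠ 0) (hkM : k < D.M)
    (hbdd : BddAbove {r : ℝ | ∃ s : ℝ, D.Δ k ≤ s ∧ s < D.Δ (k + 1) ∧ r = T k s})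
    (h : 0 ≤ T k (D.Δ k)) : 0 ≤ D.dwellBound T0 T k :=
  h.trans (le_dwellBound hk hbdd ⟨le_rfl, D.hΔlt k hkM⟩)

theorem sum_range_dwellBound (m : ℕ) :
    ∑ k ∈ Finset.range (m + 1), D.dwellBound T0 T k =
      T0 + ∑ k ∈ Finset.Ico 1 (m + 1), D.dwellBound T0 T k := by
  rw [Finset.range_eq_Ico, Finset.sum_eq_sum_Ico_succ_bot (Nat.succ_pos m), dwellBound, if_pos rfl]

end SupervisorData

namespace HysTraj

variable {D : SupervisorData} (Tr : HysTraj D)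

theorem mem_band {j : ℕ} (hj : (j : ℕ∞) ≤ Tr.N) (hq : Tr.q j < D.M) :
    Tr.y (Tr.t j) ∈ Ico (D.Δ (Tr.q j)) (D.Δ (Tr.q j + 1)) := by
  rcases Nat.eq_zero_or_pos j with rfl | hj1
  · rw [Tr.ht0]
    exact ⟨Tr.h_init_lo, Tr.h_init_hi hq⟩
  · obtain ⟨hlo, hhi⟩ := Tr.h_switch_lt j hj1 hj hq
    exact ⟨hlo, hhi.trans_lt (D.χ_lt hq.le (D.Δ_pos (by omega) hq))⟩

theorem sInf_le_last_add {n : ℕ} (hN : Tr.N = n) (hlast : Tr.q n = 0)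
    (hv : ∀ s : ℝ, Tr.v s = 0) {T0 : ℝ} (hT0 : 0 ≤ T0)
    (hT0eq : D.β 0 (D.Δ 1) T0 = D.Δ 1 / 2) :
    sInf {s : ℝ | 0 ≤ s ∧ Tr.y s ≤ D.Δ 1 / 2} ≤ Tr.t n + T0 := by
  have htn : 0 ≤ Tr.t n := Tr.t_nonneg hN.ge
  have hyn : Tr.y (Tr.t n) < D.Δ 1 := by
    simpa [hlast] using (Tr.mem_band hN.ge (hlast ▸ D.hM)).2
  have hbound := Tr.h_bound n hN.ge (Tr.t n + T0) (by linarith) fun h => by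
    rw [hN, Nat.cast_le] at h; omega
  rw [hv, add_zero, add_sub_cancel_left, hlast] at hbound
  refine csInf_le ⟨0, fun _ hs => hs.1⟩ ⟨by linarith, ?_⟩
  calc Tr.y (Tr.t n + T0) ≤ D.β 0 (Tr.y (Tr.t n)) T0 := hbound
    _ ≤ D.β 0 (D.Δ 1) T0 :=
      (D.hβKL 0 (Nat.zero_le _)).mono_left hT0 (Tr.hy_nonneg _ htn) hyn.le
    _ = D.Δ 1 / 2 := hT0eq

variable {T0 : ℝ} {T : ℕ → ℝ → ℝ}
  (hTbdd : ∀ k : ℕ, 1 ≤ k → k ≤ D.M →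
    BddAbove {r : ℝ | ∃ s : ℝ, D.Δ k ≤ s ∧ s < D.Δ (k + 1) ∧ r = T k s})
include hTbdd

theorem dwell_le_dwellBound {j : ℕ} (hj : (j : ℕ∞) ≤ Tr.N) (hq1 : Tr.q j ≠ 0)
    (hqM : Tr.q j < D.M) : T (Tr.q j) (Tr.y (Tr.t j)) ≤ D.dwellBound T0 T (Tr.q j) :=
  SupervisorData.le_dwellBound hq1 (hTbdd _ (Nat.one_le_iff_ne_zero.2 hq1) hqM.le)
    (Tr.mem_band hj hqM)

theorem sum_Ico_dwell_le {a n : ℕ} (hN : Tr.N = n) (hlast : Tr.q n = 0)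
    (hdesc : ∀ j, a ≤ j → j < n → Tr.q j = Tr.q (j + 1) + 1) (hnM : n - a < D.M) :
    ∑ j ∈ Finset.Ico a n, T (Tr.q j) (Tr.y (Tr.t j)) ≤
      ∑ k ∈ Finset.Ico 1 (n + 1 - a), D.dwellBound T0 T k := by
  calc ∑ j ∈ Finset.Ico a n, T (Tr.q j) (Tr.y (Tr.t j))
      ≤ ∑ j ∈ Finset.Ico a n, D.dwellBound T0 T (n - j) := by
        refine Finset.sum_le_sum fun j hj => ?_
        obtain ⟨haj, hjn⟩ := Finset.mem_Ico.1 hj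
        have hq := Nat.eq_sub_of_forall_eq_succ_add_one hdesc hlast haj hjn.le
        rw [← hq]
        exact Tr.dwell_le_dwellBound hTbdd (hN ▸ Nat.cast_le.2 hjn.le) (by omega) (by omega)
    _ = ∑ k ∈ Finset.Ico 1 (n + 1 - a), D.dwellBound T0 T k := by
        rw [Finset.sum_Ico_reflect _ _ n.le_succ, Nat.add_sub_cancel_left]

theorem sum_dwell_add_le_of_descending
    (hT_nonneg : ∀ k, 1 ≤ k → k ≤ D.M → 0 ≤ T k (D.Δ k)) (hT0 : ∀ s, 0 ≤ T 0 s)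
    {n : ℕ} (hN : Tr.N = n) (hlast : Tr.q n = 0) (hq0 : Tr.q 0 < D.M)
    (hdesc : ∀ j < n, Tr.q j = Tr.q (j + 1) + 1) :
    ∑ j ∈ Finset.range n, T (Tr.q j) (Tr.y (Tr.t j)) + T0 ≤
      T (Tr.q 0) (Tr.y 0) + T (Tr.q 0 + 1) (D.Δ (Tr.q 0 + 1)) +
        ∑ k ∈ Finset.range (Tr.q 0 + 1), D.dwellBound T0 T k := by
  have hqn : Tr.q 0 = n := by
    simpa using
      Nat.eq_sub_of_forall_eq_succ_add_one (fun j _ => hdesc j) hlast le_rfl (Nat.zero_le n)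
  have hnext := hT_nonneg (Tr.q 0 + 1) (by omega) hq0
  rw [D.sum_range_dwellBound]
  rcases Nat.eq_zero_or_pos n with rfl | hn
  · have := hT0 (Tr.y 0)
    simp only [hqn, Finset.range_zero, Finset.sum_empty, Finset.Ico_self] at this hnext ⊢
    linarith
  have htail := Tr.sum_Ico_dwell_le hTbdd (T0 := T0) (a := 1) hN hlast
    (fun j _ hj => hdesc j hj) (by omega)
  have hlast_bound := SupervisorData.dwellBound_nonneg (T0 := T0) (by omega) (hqn ▸ hq0)
    (hTbdd n hn (by omega)) (hT_nonneg n hn (by omega))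
  rw [Finset.range_eq_Ico, Finset.sum_eq_sum_Ico_succ_bot hn, Tr.ht0, hqn,
    Finset.sum_Ico_succ_top hn, Nat.succ_eq_add_one, zero_add]
  rw [Nat.add_sub_cancel] at htail
  rw [hqn] at hnext
  linarith

theorem sum_dwell_add_le_of_up_then_descending {n : ℕ} (hn : 0 < n) (hN : Tr.N = n)
    (hlast : Tr.q n = 0) (hq0 : Tr.q 0 < D.M) (hq1 : Tr.q 1 = Tr.q 0 + 1)
    (hy1 : Tr.y (Tr.t 1) = D.Δ (Tr.q 0 + 1))
    (hdesc : ∀ j, 1 ≤ j → j < n → Tr.q j = Tr.q (j + 1) + 1) :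
    ∑ j ∈ Finset.range n, T (Tr.q j) (Tr.y (Tr.t j)) + T0 ≤
      T (Tr.q 0) (Tr.y 0) + T (Tr.q 0 + 1) (D.Δ (Tr.q 0 + 1)) +
        ∑ k ∈ Finset.range (Tr.q 0 + 1), D.dwellBound T0 T k := by
  have hn : n = Tr.q 0 + 2 := by
    have := Nat.eq_sub_of_forall_eq_succ_add_one hdesc hlast le_rfl hn
    omega
  subst hn
  have htail := Tr.sum_Ico_dwell_le hTbdd (T0 := T0) (a := 2) hN hlast
    (fun j hj => hdesc j (by omega)) (by omega)
  rw [show Tr.q 0 + 2 + 1 - 2 = Tr.q 0 + 1 by omega] at htail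
  rw [D.sum_range_dwellBound, Finset.range_eq_Ico, Finset.sum_eq_sum_Ico_succ_bot (by omega),
    Finset.sum_eq_sum_Ico_succ_bot (by omega), Tr.ht0, hq1, hy1]
  linarith

end HysTraj

/-- **Corollary 3** (convergence-time estimate for the hysteresis supervisor):
with no disturbances (`v ≡ 0`), `q 0 < M`, dwell-time functions `T q` defined by
`β 0 (Δ 1) T₀ = Δ 1 / 2` (with `T 0` constant equal to `T₀ > 0`) and
`β q s (T q s) = χ (q-1) (Δ q)` on `[Δ q, Δ (q+1))` (on `[Δ M, ∞)` for `q = M`),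
a finite switching sequence with last mode `0`, interswitch times at most
`T (q j) (y (t j))`, and either purely descending switches or one initial upward switch
(`q 1 = q 0 + 1`, `y (t 1) = Δ (q 0 + 1)`) followed by descending switches, the time of
convergence into `{y ≤ Δ 1 / 2}` is at most
`T (q 0) (y 0) + T (q 0 + 1) (Δ (q 0 + 1)) + ∑_{k=0}^{q 0} T̄ k`, where `T̄ 0 = T₀` and
`T̄ k = sup_{Δ k ≤ s < Δ (k+1)} T k s` (finite by assumption). -/
theorem cor3 (D : SupervisorData) (Tr : HysTraj D)
    (hv : ∀ s : ℝ, Tr.v s = 0)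
    (hq0 : Tr.q 0 < D.M)
    (T0 : ℝ) (hT0pos : 0 < T0) (hT0eq : D.β 0 (D.Δ 1) T0 = D.Δ 1 / 2)
    (T : ℕ → ℝ → ℝ) (hT0' : ∀ s : ℝ, T 0 s = T0)
    (hT : ∀ q : ℕ, 1 ≤ q → q ≤ D.M → ∀ s : ℝ, D.Δ q ≤ s → (q < D.M → s < D.Δ (q + 1)) →
      0 ≤ T q s ∧ D.β q s (T q s) = D.χ (q - 1) (D.Δ q))
    (hTbdd : ∀ k : ℕ, 1 ≤ k → k ≤ D.M →
      BddAbove {r : ℝ | ∃ s : ℝ, D.Δ k ≤ s ∧ s < D.Δ (k + 1) ∧ r = T k s})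
    (Nfin : ℕ) (hN : Tr.N = (Nfin : ℕ∞))
    (hlast : Tr.q Nfin = 0)
    (hstep : ∀ j : ℕ, j < Nfin → Tr.t (j + 1) - Tr.t j ≤ T (Tr.q j) (Tr.y (Tr.t j)))
    (halt : (∀ j : ℕ, j < Nfin → Tr.q j = Tr.q (j + 1) + 1) ∨
      (Tr.q 1 = Tr.q 0 + 1 ∧ Tr.y (Tr.t 1) = D.Δ (Tr.q 0 + 1) ∧
        ∀ j : ℕ, 1 ≤ j → j < Nfin → Tr.q j = Tr.q (j + 1) + 1)) :
    sInf {s : ℝ | 0 ≤ s ∧ Tr.y s ≤ D.Δ 1 / 2} ≤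
      T (Tr.q 0) (Tr.y 0) + T (Tr.q 0 + 1) (D.Δ (Tr.q 0 + 1)) +
        ∑ k ∈ Finset.range (Tr.q 0 + 1),
          (if k = 0 then T0
           else sSup {r : ℝ | ∃ s : ℝ, D.Δ k ≤ s ∧ s < D.Δ (k + 1) ∧ r = T k s}) := by
  have hT_nonneg : ∀ k, 1 ≤ k → k ≤ D.M → 0 ≤ T k (D.Δ k) := fun k hk1 hkM =>
    (hT k hk1 hkM _ le_rfl fun hk => D.hΔlt k hk).1
  have hT0_nonneg : ∀ s, 0 ≤ T 0 s := fun s => (hT0' s).symm ▸ hT0pos.le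
  have hsum : ∑ j ∈ Finset.range Nfin, T (Tr.q j) (Tr.y (Tr.t j)) + T0 ≤
      T (Tr.q 0) (Tr.y 0) + T (Tr.q 0 + 1) (D.Δ (Tr.q 0 + 1)) +
        ∑ k ∈ Finset.range (Tr.q 0 + 1), D.dwellBound T0 T k := by
    rcases halt with hdesc | ⟨hq1, hy1, hdesc⟩
    · exact Tr.sum_dwell_add_le_of_descending hTbdd hT_nonneg hT0_nonneg hN hlast hq0 hdesc
    rcases Nat.eq_zero_or_pos Nfin with rfl | hn
    · exact Tr.sum_dwell_add_le_of_descending hTbdd hT_nonneg hT0_nonneg hN hlast hq0 (by simp)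
    · exact Tr.sum_dwell_add_le_of_up_then_descending hTbdd hn hN hlast hq0 hq1 hy1 hdesc
  calc sInf {s : ℝ | 0 ≤ s ∧ Tr.y s ≤ D.Δ 1 / 2} ≤ Tr.t Nfin + T0 :=
        Tr.sInf_le_last_add hN hlast hv hT0pos.le hT0eq
    _ ≤ ∑ j ∈ Finset.range Nfin, T (Tr.q j) (Tr.y (Tr.t j)) + T0 := by
        gcongr
        exact le_sum_range_of_sub_le Tr.ht0 hstep
    _ ≤ _ := hsum
end

section
/- Exponential SIIOS estimate for the Lur'e observer error (Section 5.1). Let n, m be positive integers, P a symmetric positive definite real n×n matrix with smallest eigenvalue λ_min(P) and largest eigenvalue λ_max(P), α > 0, B a real n×m matrix, G : ℝ → Matrix(ℝ, n, n) with G(t)ᵀP + P·G(t) + αP negative semidefinite for every t, and d : ℝ → ℝᵐ with ‖d(t)‖ ≤ D for all t. Then there exists a constant c > 0, depending only on P, B and α, such that every differentiable e : [0,∞) → ℝⁿ satisfying e′(t) = G(t)·e(t) + B·d(t) obeys, for all t ≥ 0: ‖e(t)‖ ≤ √(2·λ_max(P)/λ_min(P)) · ‖e(0)‖ · e^{−αt/4}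 + c·D. That is, the observer error dynamics are exponentially state-independent input-to-output stable with linear gain. -/
/-!
Take `V(x) = ⟪x, P x⟫` as Lyapunov function. Along the error dynamics the matrix inequality gives
`V' ≤ -α V + 2 ‖P B‖ D ‖e‖`, and Young's inequality absorbs the input term into half of the
decay: `V' ≤ -(α/2) V + ε` with `ε = 2 ‖P B‖² D² / (α λ_min)`. The comparison principle
(Grönwall) yields `V(t) ≤ V(0) e^{-αt/2} + 2ε/α`, and the eigenvalue bounds
`λ_min ‖x‖² ≤ V(x) ≤ λ_max ‖x‖²` turn this into the estimate on `‖e t‖`; the square root of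
`e^{-αt/2}` gives the rate `α/4`.
-/

open Matrix Real
open scoped RealInnerProductSpace

theorem le_mul_exp_add_div_of_hasDerivAt_le {g g' : ℝ → ℝ} {k ε : ℝ} (hk : 0 < k) (hε : 0 ≤ ε)
    (hg : ∀ s ≥ 0, HasDerivAt g (g' s) s) (hbound : ∀ s ≥ 0, g' s ≤ -k * g s + ε)
    {t : ℝ} (ht : 0 ≤ t) :
    g t ≤ g 0 * exp (-k * t) + ε / k := by
  have hgron := le_gronwallBound_of_liminf_deriv_right_le (b := t) (δ := g 0)
    (fun s hs => (hg s hs.1).continuousAt.continuousWithinAt)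
    (fun s hs _ hr => (hg s hs.1).hasDerivWithinAt.liminf_right_slope_le hr) le_rfl
    (fun s hs => hbound s hs.1) t ⟨ht, le_rfl⟩
  rw [sub_zero, gronwallBound_of_K_ne_0 (neg_ne_zero.2 hk.ne')] at hgron
  have hexp : exp (-k * t) ≤ 1 := exp_le_one_iff.2 (by nlinarith)
  calc g t ≤ g 0 * exp (-k * t) + ε / k * (1 - exp (-k * t)) := hgron.trans_eq (by ring)
    _ ≤ g 0 * exp (-k * t) + ε / k := by
        gcongr
        nlinarith [exp_pos (-k * t), div_nonneg hε hk.le]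

theorem le_sqrt_div_mul_add_of_mul_sq_le {a b x y z : ℝ} (ha : 0 < a) (hy : 0 ≤ y)
    (hz : 0 ≤ z) (h : a * x ^ 2 ≤ b * y ^ 2 + a * z ^ 2) : x ≤ √(b / a) * y + z := by
  have hsq : x ^ 2 ≤ (√(b / a) * y) ^ 2 + z ^ 2 := by
    rw [mul_pow, sq_sqrt']
    calc x ^ 2 = (a * x ^ 2) / a := by field_simp
      _ ≤ (b * y ^ 2 + a * z ^ 2) / a := by gcongr
      _ = b / a * y ^ 2 + z ^ 2 := by field_simp
      _ ≤ max (b / a) 0 * y ^ 2 + z ^ 2 := by gcongr; exact le_max_left _ _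
  have : 0 ≤ √(b / a) * y := by positivity
  nlinarith

section QuadraticLyapunov

variable {E : Type*} [NormedAddCommGroup E] [InnerProductSpace ℝ E] [CompleteSpace E]
  {P : E →ₗ[ℝ] E}

theorem LinearMap.IsSymmetric.hasDerivAt_inner_apply_self (hP : P.IsSymmetric) {e : ℝ → E}
    {v : E} {s : ℝ} (he : HasDerivAt e v s) :
    HasDerivAt (fun u => ⟪e u, P (e u)⟫) (2 * ⟪e s, P v⟫) s := by
  let Pc : E →L[ℝ] E := ⟨P, hP.continuous⟩
  refine (he.inner ℝ (Pc.hasFDerivAt.comp_hasDerivAt s he)).congr_deriv ?_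
  change ⟪e s, P v⟫ + ⟪v, P (e s)⟫ = _
  rw [real_inner_comm, ← hP]; ring

theorem LinearMap.IsSymmetric.inner_apply_self_le_of_dissipation (hP : P.IsSymmetric)
    {a α W : ℝ} (ha : 0 < a) (hα : 0 < α) (hPa : ∀ x, a * ‖x‖ ^ 2 ≤ ⟪x, P x⟫)
    {e e' : ℝ → E} (he : ∀ s ≥ 0, HasDerivAt e (e' s) s)
    (hdiss : ∀ s ≥ 0, 2 * ⟪e s, P (e' s)⟫ ≤ -α * ⟪e s, P (e s)⟫ + 2 * W * ‖e s‖)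
    {t : ℝ} (ht : 0 ≤ t) :
    ⟪e t, P (e t)⟫ ≤ ⟪e 0, P (e 0)⟫ * exp (-(α / 2) * t) + a * (2 * W / (α * a)) ^ 2 := by
  have hyoung : ∀ r : ℝ, 2 * W * r ≤ α / 2 * (a * r ^ 2) + 2 * W ^ 2 / (α * a) := by
    intro r
    rw [← sub_nonneg]
    have : α / 2 * (a * r ^ 2) + 2 * W ^ 2 / (α * a) - 2 * W * r
        = (α * a * r - 2 * W) ^ 2 / (2 * (α * a)) := by field_simp; ring
    rw [this]; positivity
  have hcmp := le_mul_exp_add_div_of_hasDerivAt_le (ε := 2 * W ^ 2 / (α * a)) (half_pos hα)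
    (by positivity) (fun s hs => hP.hasDerivAt_inner_apply_self (he s hs))
    (fun s hs => by
      linarith [hdiss s hs, hyoung ‖e s‖,
        mul_le_mul_of_nonneg_left (hPa (e s)) (half_pos hα).le]) ht
  exact hcmp.trans_eq (by congr 1; field_simp)

theorem LinearMap.IsSymmetric.norm_le_of_dissipation (hP : P.IsSymmetric)
    {a b α W : ℝ} (ha : 0 < a) (hα : 0 < α) (hW : 0 ≤ W) (hPa : ∀ x, a * ‖x‖ ^ 2 ≤ ⟪x, P x⟫)
    (hPb : ∀ x, ⟪x, P x⟫ ≤ b * ‖x‖ ^ 2)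
    {e e' : ℝ → E} (he : ∀ s ≥ 0, HasDerivAt e (e' s) s)
    (hdiss : ∀ s ≥ 0, 2 * ⟪e s, P (e' s)⟫ ≤ -α * ⟪e s, P (e s)⟫ + 2 * W * ‖e s‖)
    {t : ℝ} (ht : 0 ≤ t) :
    ‖e t‖ ≤ √(b / a) * (‖e 0‖ * exp (-(α * t) / 4)) + 2 * W / (α * a) := by
  refine le_sqrt_div_mul_add_of_mul_sq_le ha (by positivity) (by positivity) ?_
  have hexp : exp (-(α / 2) * t) = exp (-(α * t) / 4) ^ 2 := by
    rw [← exp_nat_mul]; ring_nf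
  calc a * ‖e t‖ ^ 2 ≤ ⟪e t, P (e t)⟫ := hPa (e t)
    _ ≤ ⟪e 0, P (e 0)⟫ * exp (-(α / 2) * t) + a * (2 * W / (α * a)) ^ 2 :=
        hP.inner_apply_self_le_of_dissipation ha hα hPa he hdiss ht
    _ ≤ b * (‖e 0‖ * exp (-(α * t) / 4)) ^ 2 + a * (2 * W / (α * a)) ^ 2 := by
        rw [hexp, mul_pow, ← mul_assoc]
        gcongr
        exact hPb (e 0)

end QuadraticLyapunov

namespace Matrix

variable {ι κ : Type*} [Fintype ι] [DecidableEq ι] [Fintype κ] [DecidableEq κ]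
  {A : Matrix ι ι ℝ}

theorem IsHermitian.inner_toEuclideanLin_self_eq_sum (hA : A.IsHermitian)
    (x : EuclideanSpace ℝ ι) :
    ⟪x, toEuclideanLin A x⟫ = ∑ i, hA.eigenvalues i * ⟪hA.eigenvectorBasis i, x⟫ ^ 2 := by
  rw [← hA.eigenvectorBasis.sum_inner_mul_inner x (toEuclideanLin A x)]
  refine Finset.sum_congr rfl fun i _ => ?_
  have heig : toEuclideanLin A (hA.eigenvectorBasis i) =
      hA.eigenvalues i • hA.eigenvectorBasis i := by
    apply WithLp.ofLp_injective
    simpa using hA.mulVec_eigenvectorBasis i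
  rw [← isSymmetric_toEuclideanLin_iff.2 hA, heig, real_inner_smul_left, real_inner_comm x]
  ring

theorem IsHermitian.mul_norm_sq_le_inner_toEuclideanLin (hA : A.IsHermitian) {c : ℝ}
    (hc : ∀ i, c ≤ hA.eigenvalues i) (x : EuclideanSpace ℝ ι) :
    c * ‖x‖ ^ 2 ≤ ⟪x, toEuclideanLin A x⟫ := by
  rw [hA.inner_toEuclideanLin_self_eq_sum, ← hA.eigenvectorBasis.sum_sq_inner_right,
    Finset.mul_sum]
  exact Finset.sum_le_sum fun i _ => mul_le_mul_of_nonneg_right (hc i) (sq_nonneg _)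

theorem IsHermitian.inner_toEuclideanLin_le_mul_norm_sq (hA : A.IsHermitian) {c : ℝ}
    (hc : ∀ i, hA.eigenvalues i ≤ c) (x : EuclideanSpace ℝ ι) :
    ⟪x, toEuclideanLin A x⟫ ≤ c * ‖x‖ ^ 2 := by
  rw [hA.inner_toEuclideanLin_self_eq_sum, ← hA.eigenvectorBasis.sum_sq_inner_right,
    Finset.mul_sum]
  exact Finset.sum_le_sum fun i _ => mul_le_mul_of_nonneg_right (hc i) (sq_nonneg _)

theorem IsHermitian.two_mul_inner_toEuclideanLin_le (hA : A.IsHermitian) {G : Matrix ι ι ℝ}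
    {α : ℝ} {x : EuclideanSpace ℝ ι} (hG : ⟪x, toEuclideanLin (Gᵀ * A + A * G + α • A) x⟫ ≤ 0)
    (w : EuclideanSpace ℝ ι) :
    2 * ⟪x, toEuclideanLin A (toEuclideanLin G x + w)⟫ ≤
      -α * ⟪x, toEuclideanLin A x⟫ + 2 * ‖toEuclideanLin A w‖ * ‖x‖ := by
  have htranspose : ⟪x, toEuclideanLin Gᵀ (toEuclideanLin A x)⟫ =
      ⟪x, toEuclideanLin A (toEuclideanLin G x)⟫ := by
    rw [← conjTranspose_eq_transpose_of_trivial, toEuclideanLin_conjTranspose_eq_adjoint,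
      LinearMap.adjoint_inner_right, ← isSymmetric_toEuclideanLin_iff.2 hA, real_inner_comm]
  simp only [map_add, map_smul, toLpLin_mul_same, LinearMap.add_apply, LinearMap.smul_apply,
    LinearMap.comp_apply, inner_add_right, real_inner_smul_right, htranspose] at hG
  have hcs := real_inner_le_norm x (toEuclideanLin A w)
  rw [map_add, inner_add_right]
  linarith

section L2OpNorm

open scoped Matrix.Norms.L2Operator

omit [DecidableEq ι] in
theorem norm_toEuclideanLin_apply_le (M : Matrix ι κ ℝ) (x : EuclideanSpace ℝ κ) :
    ‖toEuclideanLin M x‖ ≤ ‖M‖ * ‖x‖ :=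
  M.l2_opNorm_mulVec x

theorem IsHermitian.norm_le_of_lyapunov_inequality (hA : A.IsHermitian) {a b α D : ℝ}
    (ha : 0 < a) (hα : 0 < α) (hAa : ∀ i, a ≤ hA.eigenvalues i) (hAb : ∀ i, hA.eigenvalues i ≤ b)
    {G : ℝ → Matrix ι ι ℝ}
    (hG : ∀ s x, ⟪x, toEuclideanLin ((G s)ᵀ * A + A * G s + α • A) x⟫ ≤ 0)
    (B : Matrix ι κ ℝ) {d : ℝ → EuclideanSpace ℝ κ} (hd : ∀ s, ‖d s‖ ≤ D)
    {e : ℝ → EuclideanSpace ℝ ι}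
    (he : ∀ s ≥ 0, HasDerivAt e (toEuclideanLin (G s) (e s) + toEuclideanLin B (d s)) s)
    {t : ℝ} (ht : 0 ≤ t) :
    ‖e t‖ ≤ √(b / a) * (‖e 0‖ * Real.exp (-(α * t) / 4)) + 2 * ‖A * B‖ / (α * a) * D := by
  have hD : 0 ≤ D := (norm_nonneg _).trans (hd 0)
  have hinput : ∀ s, ‖toEuclideanLin A (toEuclideanLin B (d s))‖ ≤ ‖A * B‖ * D := fun s =>
    calc ‖toEuclideanLin A (toEuclideanLin B (d s))‖ = ‖toEuclideanLin (A * B) (d s)‖ := by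
          rw [toLpLin_mul_same, LinearMap.comp_apply]
      _ ≤ ‖A * B‖ * ‖d s‖ := norm_toEuclideanLin_apply_le _ _
      _ ≤ ‖A * B‖ * D := by gcongr; exact hd s
  refine ((isSymmetric_toEuclideanLin_iff.2 hA).norm_le_of_dissipation
    (W := ‖A * B‖ * D) ha hα (by positivity) (hA.mul_norm_sq_le_inner_toEuclideanLin hAa)
    (hA.inner_toEuclideanLin_le_mul_norm_sq hAb) he
    (fun s _ => (hA.two_mul_inner_toEuclideanLin_le (hG s (e s)) _).trans
      (by gcongr; exact hinput s)) ht).trans_eq (by ring)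

end L2OpNorm

end Matrix

theorem lure_observer_exp_siios_general (n m : ℕ) (hn : 0 < n)
    (P : Matrix (Fin n) (Fin n) ℝ) (hPpos : P.PosDef)
    (α : ℝ) (hα : 0 < α)
    (B : Matrix (Fin n) (Fin m) ℝ) :
    ∃ c > (0:ℝ), ∀ G : ℝ → Matrix (Fin n) (Fin n) ℝ,
      (∀ t : ℝ, ∀ x : EuclideanSpace ℝ (Fin n),
        ⟪x, Matrix.toEuclideanLin ((G t)ᵀ * P + P * G t + α • P) x⟫ ≤ 0) →
      ∀ (d : ℝ → EuclideanSpace ℝ (Fin m)) (D : ℝ), (∀ t : ℝ, ‖d t‖ ≤ D) →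
      ∀ e : ℝ → EuclideanSpace ℝ (Fin n),
        (∀ t ≥ (0:ℝ), HasDerivAt e
          (Matrix.toEuclideanLin (G t) (e t) + Matrix.toEuclideanLin B (d t)) t) →
        ∀ t ≥ (0:ℝ),
          ‖e t‖ ≤
            Real.sqrt (2 *
                (Finset.univ.sup' (Finset.univ_nonempty_iff.mpr ⟨⟨0, hn⟩⟩)
                  hPpos.1.eigenvalues) /
                (Finset.univ.inf' (Finset.univ_nonempty_iff.mpr ⟨⟨0, hn⟩⟩)
                  hPpos.1.eigenvalues))
              * ‖e 0‖ * Real.exp (-(α * t) / 4) + c * D := by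
  set lmin := Finset.univ.inf' (Finset.univ_nonempty_iff.mpr ⟨⟨0, hn⟩⟩) hPpos.1.eigenvalues
  set lmax := Finset.univ.sup' (Finset.univ_nonempty_iff.mpr ⟨⟨0, hn⟩⟩) hPpos.1.eigenvalues
  have hlmin : 0 < lmin := (Finset.lt_inf'_iff _).2 fun i _ => hPpos.eigenvalues_pos i
  -- `P * B` carries the spectral norm; the `+ 1` keeps `c` positive when `P * B = 0`.
  open scoped Matrix.Norms.L2Operator in
  refine ⟨2 * ‖P * B‖ / (α * lmin) + 1, by positivity, fun G hG d D hD e he t ht => ?_⟩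
  refine (hPpos.1.norm_le_of_lyapunov_inequality (b := lmax) hlmin hα
    (fun i => Finset.inf'_le _ (Finset.mem_univ i)) (fun i => Finset.le_sup' _ (Finset.mem_univ i))
    hG B hD he ht).trans ?_
  have hD0 : 0 ≤ D := (norm_nonneg _).trans (hD 0)
  have hlmax : 0 < lmax :=
    (hPpos.eigenvalues_pos ⟨0, hn⟩).trans_le (Finset.le_sup' _ (Finset.mem_univ _))
  rw [← mul_assoc]
  gcongr <;> linarith

/-- **Exponential SIIOS estimate for the Lur'e observer error** (Section 5.1): if
`G(t)ᵀ P + P G(t) + α P` is negative semidefinite for every `t` and `‖d(t)‖ ≤ D`, then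
there is `c > 0` (depending only on `P`, `B` and `α`) such that every solution of
`e′ = G(t) e + B d(t)` satisfies
`‖e t‖ ≤ √(2 λ_max(P)/λ_min(P)) ‖e 0‖ e^{−α t/4} + c D` for all `t ≥ 0`. -/
theorem lure_observer_exp_siios (n m : ℕ) (hn : 0 < n) (hm : 0 < m)
    (P : Matrix (Fin n) (Fin n) ℝ) (hPsymm : P.IsSymm) (hPpos : P.PosDef)
    (α : ℝ) (hα : 0 < α)
    (B : Matrix (Fin n) (Fin m) ℝ) :
    ∃ c > (0:ℝ), ∀ G : ℝ → Matrix (Fin n) (Fin n) ℝ,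
      (∀ t : ℝ, ∀ x : EuclideanSpace ℝ (Fin n),
        ⟪x, Matrix.toEuclideanLin ((G t)ᵀ * P + P * G t + α • P) x⟫ ≤ 0) →
      ∀ (d : ℝ → EuclideanSpace ℝ (Fin m)) (D : ℝ), (∀ t : ℝ, ‖d t‖ ≤ D) →
      ∀ e : ℝ → EuclideanSpace ℝ (Fin n),
        (∀ t ≥ (0:ℝ), HasDerivAt e
          (Matrix.toEuclideanLin (G t) (e t) + Matrix.toEuclideanLin B (d t)) t) →
        ∀ t ≥ (0:ℝ),
          ‖e t‖ ≤
            Real.sqrt (2 *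
                (Finset.univ.sup' (Finset.univ_nonempty_iff.mpr ⟨⟨0, hn⟩⟩)
                  hPpos.1.eigenvalues) /
                (Finset.univ.inf' (Finset.univ_nonempty_iff.mpr ⟨⟨0, hn⟩⟩)
                  hPpos.1.eigenvalues))
              * ‖e 0‖ * Real.exp (-(α * t) / 4) + c * D :=
  lure_observer_exp_siios_general n m hn P hPpos α hα B
end

section
/- Lyapunov inequality for master–slave Lorenz synchronization under the cancellation control (Section 5.2, control (lo:eq4)). Let σ > 0, β > 0, ρ > 0 and 0 < λ < 1. Let x₁, y₁, z₁, x₂, y₂, z₂, d₁, d₂, d₃ : ℝ → ℝ with x₁,y₁,z₁,x₂,y₂,z₂ differentiable, satisfying the master Lorenz system x₁′ = σ(y₁ − x₁) + d₁, y₁′ = x₁(ρ − z₁) − y₁ + d₂, z₁′ = x₁y₁ − βz₁ + d₃, and the slave system x₂′ = σ(y₂ − x₂), y₂′ = x₂(ρ − z₂) − y₂ + u₁, z₂′ = x₂y₂ − βz₂ + u₂, with controls u₁ = (ρ + σ − 2√((1−λ)σ) − z₂)·e₁ and u₂ = y₂·e₁, where e₁ = x₁ − x₂, e₂ = y₁ −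 y₂, e₃ = z₁ − z₂. Then V(t) := ½(e₁(t)² + e₂(t)² + e₃(t)²) is differentiable and, for all t, V′(t) ≤ −λσ·e₁(t)² − (√((1−λ)σ)·e₁(t) − e₂(t))² − β·e₃(t)² + e₁(t)d₁(t) + e₂(t)d₂(t) + e₃(t)d₃(t). -/
/-!
Along solutions, `V′ = e₁e₁′ + e₂e₂′ + e₃e₃′`. The control `u₂ = y₂e₁` turns the nonlinear
part of `e₃′` into `x₁e₂`, and `u₁` turns that of `e₂′` into `−x₁e₃ + (2√((1−λ)σ) − σ)e₁`,
so the cross terms `±x₁e₂e₃` cancel and `V′` is the quadratic form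
`−σe₁² + 2√((1−λ)σ)e₁e₂ − e₂² − βe₃²` plus the disturbance terms. Completing the square with
`√((1−λ)σ)² = (1−λ)σ` shows that the claimed inequality actually holds with equality.
-/

theorem HasDerivAt.add_sq_add_sq_div_two {f g h : ℝ → ℝ} {f' g' h' t : ℝ}
    (hf : HasDerivAt f f' t) (hg : HasDerivAt g g' t) (hh : HasDerivAt h h' t) :
    HasDerivAt (fun t => (f t ^ 2 + g t ^ 2 + h t ^ 2) / 2)
      (f t * f' + g t * g' + h t * h') t := by
  refine ((((hf.pow 2).add (hg.pow 2)).add (hh.pow 2)).div_const 2).congr_deriv ?_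
  ring

theorem lorenz_cancellation_error_energy (σ β ρ s x₁ y₁ z₁ x₂ y₂ z₂ d₁ d₂ d₃ : ℝ) :
    (x₁ - x₂) * ((σ * (y₁ - x₁) + d₁) - σ * (y₂ - x₂))
      + (y₁ - y₂) * ((x₁ * (ρ - z₁) - y₁ + d₂)
          - (x₂ * (ρ - z₂) - y₂ + (ρ + σ - 2 * s - z₂) * (x₁ - x₂)))
      + (z₁ - z₂) * ((x₁ * y₁ - β * z₁ + d₃) - (x₂ * y₂ - β * z₂ + y₂ * (x₁ - x₂))) =
    -σ * (x₁ - x₂) ^ 2 + 2 * s * (x₁ - x₂) * (y₁ - y₂) - (y₁ - y₂) ^ 2 - β * (z₁ - z₂) ^ 2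
      + (x₁ - x₂) * d₁ + (y₁ - y₂) * d₂ + (z₁ - z₂) * d₃ := by
  ring

theorem lorenz_cancellation_lyapunov_general
    (σ β ρ lam : ℝ) (hσ : 0 < σ)
    (hlam1 : lam < 1)
    (x₁ y₁ z₁ x₂ y₂ z₂ d₁ d₂ d₃ : ℝ → ℝ)
    (hx₁ : ∀ t : ℝ, HasDerivAt x₁ (σ * (y₁ t - x₁ t) + d₁ t) t)
    (hy₁ : ∀ t : ℝ, HasDerivAt y₁ (x₁ t * (ρ - z₁ t) - y₁ t + d₂ t) t)
    (hz₁ : ∀ t : ℝ, HasDerivAt z₁ (x₁ t * y₁ t - β * z₁ t + d₃ t) t)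
    (hx₂ : ∀ t : ℝ, HasDerivAt x₂ (σ * (y₂ t - x₂ t)) t)
    (hy₂ : ∀ t : ℝ, HasDerivAt y₂ (x₂ t * (ρ - z₂ t) - y₂ t +
      (ρ + σ - 2 * Real.sqrt ((1 - lam) * σ) - z₂ t) * (x₁ t - x₂ t)) t)
    (hz₂ : ∀ t : ℝ, HasDerivAt z₂ (x₂ t * y₂ t - β * z₂ t + y₂ t * (x₁ t - x₂ t)) t) :
    Differentiable ℝ
      (fun t => ((x₁ t - x₂ t) ^ 2 + (y₁ t - y₂ t) ^ 2 + (z₁ t - z₂ t) ^ 2) / 2) ∧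
    ∀ t : ℝ,
      deriv (fun t => ((x₁ t - x₂ t) ^ 2 + (y₁ t - y₂ t) ^ 2 + (z₁ t - z₂ t) ^ 2) / 2) t ≤
        -(lam * σ) * (x₁ t - x₂ t) ^ 2
          - (Real.sqrt ((1 - lam) * σ) * (x₁ t - x₂ t) - (y₁ t - y₂ t)) ^ 2
          - β * (z₁ t - z₂ t) ^ 2
          + (x₁ t - x₂ t) * d₁ t + (y₁ t - y₂ t) * d₂ t + (z₁ t - z₂ t) * d₃ t := by
  have hV : ∀ t, HasDerivAt
      (fun t => ((x₁ t - x₂ t) ^ 2 + (y₁ t - y₂ t) ^ 2 + (z₁ t - z₂ t) ^ 2) / 2)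
      (-σ * (x₁ t - x₂ t) ^ 2 + 2 * Real.sqrt ((1 - lam) * σ) * (x₁ t - x₂ t) * (y₁ t - y₂ t)
        - (y₁ t - y₂ t) ^ 2 - β * (z₁ t - z₂ t) ^ 2
        + (x₁ t - x₂ t) * d₁ t + (y₁ t - y₂ t) * d₂ t + (z₁ t - z₂ t) * d₃ t) t := fun t =>
    (HasDerivAt.add_sq_add_sq_div_two ((hx₁ t).sub (hx₂ t)) ((hy₁ t).sub (hy₂ t))
      ((hz₁ t).sub (hz₂ t))).congr_deriv (lorenz_cancellation_error_energy ..)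
  have hsqrt : Real.sqrt ((1 - lam) * σ) ^ 2 = (1 - lam) * σ :=
    Real.sq_sqrt (mul_nonneg (sub_nonneg.2 hlam1.le) hσ.le)
  refine ⟨fun t => (hV t).differentiableAt, fun t => le_of_eq ?_⟩
  rw [(hV t).deriv]
  linear_combination (x₁ t - x₂ t) ^ 2 * hsqrt

/-- **Lyapunov inequality for master–slave Lorenz synchronization under the cancellation
control** (Section 5.2, control (lo:eq4)): with `u₁ = (ρ + σ − 2√((1−λ)σ) − z₂) e₁` and
`u₂ = y₂ e₁`, the function `V = ½(e₁² + e₂² + e₃²)` of the synchronization errors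
`e₁ = x₁ − x₂`, `e₂ = y₁ − y₂`, `e₃ = z₁ − z₂` is differentiable and satisfies
`V′ ≤ −λσ e₁² − (√((1−λ)σ) e₁ − e₂)² − β e₃² + e₁ d₁ + e₂ d₂ + e₃ d₃`. -/
theorem lorenz_cancellation_lyapunov
    (σ β ρ lam : ℝ) (hσ : 0 < σ) (hβ : 0 < β) (hρ : 0 < ρ)
    (hlam0 : 0 < lam) (hlam1 : lam < 1)
    (x₁ y₁ z₁ x₂ y₂ z₂ d₁ d₂ d₃ : ℝ → ℝ)
    (hx₁ : ∀ t : ℝ, HasDerivAt x₁ (σ * (y₁ t - x₁ t) + d₁ t) t)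
    (hy₁ : ∀ t : ℝ, HasDerivAt y₁ (x₁ t * (ρ - z₁ t) - y₁ t + d₂ t) t)
    (hz₁ : ∀ t : ℝ, HasDerivAt z₁ (x₁ t * y₁ t - β * z₁ t + d₃ t) t)
    (hx₂ : ∀ t : ℝ, HasDerivAt x₂ (σ * (y₂ t - x₂ t)) t)
    (hy₂ : ∀ t : ℝ, HasDerivAt y₂ (x₂ t * (ρ - z₂ t) - y₂ t +
      (ρ + σ - 2 * Real.sqrt ((1 - lam) * σ) - z₂ t) * (x₁ t - x₂ t)) t)
    (hz₂ : ∀ t : ℝ, HasDerivAt z₂ (x₂ t * y₂ t - β * z₂ t + y₂ t * (x₁ t - x₂ t)) t) :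
    Differentiable ℝ
      (fun t => ((x₁ t - x₂ t) ^ 2 + (y₁ t - y₂ t) ^ 2 + (z₁ t - z₂ t) ^ 2) / 2) ∧
    ∀ t : ℝ,
      deriv (fun t => ((x₁ t - x₂ t) ^ 2 + (y₁ t - y₂ t) ^ 2 + (z₁ t - z₂ t) ^ 2) / 2) t ≤
        -(lam * σ) * (x₁ t - x₂ t) ^ 2
          - (Real.sqrt ((1 - lam) * σ) * (x₁ t - x₂ t) - (y₁ t - y₂ t)) ^ 2
          - β * (z₁ t - z₂ t) ^ 2
          + (x₁ t - x₂ t) * d₁ t + (y₁ t - y₂ t) * d₂ t + (z₁ t - z₂ t) * d₃ t :=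
  lorenz_cancellation_lyapunov_general σ β ρ lam hσ hlam1 x₁ y₁ z₁ x₂ y₂ z₂ d₁ d₂ d₃ hx₁ hy₁ hz₁ hx₂
    hy₂ hz₂
end

section
/- Input-to-state stability of the cancellation-controlled Lorenz synchronization error. Let σ > 0, β > 0, ρ > 0 and 0 < λ < 1. Then there exist constants c > 0 and K > 0, depending only on σ, β, λ, such that the following holds. Let x₁, y₁, z₁, x₂, y₂, z₂, d₁, d₂, d₃ : ℝ → ℝ satisfy the master Lorenz system x₁′ = σ(y₁ − x₁) + d₁, y₁′ = x₁(ρ − z₁) − y₁ + d₂, z₁′ = x₁y₁ − βz₁ + d₃ and the slave system x₂′ = σ(y₂ − x₂), y₂′ = x₂(ρ − z₂) − y₂ + u₁, z₂′ = x₂y₂ − βz₂ + u₂ with u₁ = (ρ + σ − 2√((1−λ)σ) − z₂)e₁, u₂ = y₂e₁, where e₁ = x₁ − x₂, e₂ = y₁ − y₂, e₃ = z₁ − z₂, and suppose √(d₁(t)² + d₂(t)² + d₃(t)²) ≤ D for all t ≥ 0. Then, writing ‖e(t)‖ = √(e₁(t)² + e₂(t)² + e₃(t)²), for all t ≥ 0: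 ‖e(t)‖ ≤ ‖e(0)‖·e^{−ct} + K·D. -/
/-! With `s = √((1 - λ) σ)`, the control turns the error equations into
`e₂' = -(σ - 2 s) e₁ - e₂ - x₁ e₃ + d₂` and `e₃' = x₁ e₂ - β e₃ + d₃`, so the nonlinear terms cancel
in `V = ‖e‖²`: `V' = 2 (-σ e₁² - e₂² - β e₃² + 2 s e₁ e₂ + ⟨e, d⟩)`. As `s² < σ`, the
quadratic part is at most `-a V` for a rate `a` depending only on `σ`, `β`, `λ`; with Cauchy–Schwarz
this gives `V' ≤ -2 a V + 2 D √V`, i.e. `‖e‖' ≤ -a ‖e‖ + D`, and Grönwall's inequality yields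
`‖e(t)‖ ≤ ‖e(0)‖ e^{-a t} + D / a`. -/

open Real Set Filter Topology

theorem le_exp_mul_add_div_of_hasDerivAt_le {f f' : ℝ → ℝ} {a b t : ℝ} (ha : 0 < a)
    (hb : 0 ≤ b) (hf : ∀ u ≥ 0, HasDerivAt f (f' u) u) (bound : ∀ u ≥ 0, f' u ≤ -a * f u + b)
    (ht : 0 ≤ t) :
    f t ≤ f 0 * exp (-a * t) + b / a := by
  have hgronwall : f t ≤ gronwallBound (f 0) (-a) b (t - 0) :=
    le_gronwallBound_of_liminf_deriv_right_le (f' := f')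
      (fun u hu => (hf u hu.1).continuousAt.continuousWithinAt)
      (fun u hu _ hr => by
        simpa only [slope_def_field, div_eq_inv_mul] using
          (hf u hu.1).hasDerivWithinAt.liminf_right_slope_le hr)
      le_rfl (fun u hu => bound u hu.1) t ⟨ht, le_rfl⟩
  rw [sub_zero, gronwallBound_of_K_ne_0 (neg_ne_zero.2 ha.ne')] at hgronwall
  calc f t ≤ f 0 * exp (-a * t) + b / -a * (exp (-a * t) - 1) := hgronwall
    _ ≤ f 0 * exp (-a * t) + b / a := by
      have : 0 ≤ b / a * exp (-a * t) := by positivity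
      rw [div_neg]
      nlinarith

/-- `√V` itself need not be differentiable where `V` vanishes, so the comparison is applied to
`√(V + η)`, which satisfies `(√(V + η))' ≤ -a √(V + η) + a √η + D`, and then `η → 0⁺`. -/
theorem sqrt_le_of_hasDerivAt_le {V V' : ℝ → ℝ} {a D t : ℝ} (ha : 0 < a) (hD : 0 ≤ D)
    (hV₀ : ∀ u ≥ 0, 0 ≤ V u) (hV : ∀ u ≥ 0, HasDerivAt V (V' u) u)
    (bound : ∀ u ≥ 0, V' u ≤ -2 * a * V u + 2 * D * √(V u)) (ht : 0 ≤ t) :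
    √(V t) ≤ √(V 0) * exp (-a * t) + D / a := by
  have hregular : ∀ η > 0, √(V t + η) ≤ √(V 0 + η) * exp (-a * t) + (a * √η + D) / a := by
    intro η hη
    have hpos : ∀ u ≥ 0, 0 < V u + η := fun u hu => by linarith [hV₀ u hu]
    refine le_exp_mul_add_div_of_hasDerivAt_le ha (by positivity)
      (fun u hu => ((hV u hu).add_const η).sqrt (hpos u hu).ne') (fun u hu => ?_) ht
    have hsq : √(V u + η) ^ 2 = V u + η := sq_sqrt (hpos u hu).le
    have hη_sq : √η ^ 2 = η := sq_sqrt hη.le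
    have hη_le : √η ≤ √(V u + η) := sqrt_le_sqrt (by linarith [hV₀ u hu])
    have hV_le : √(V u) ≤ √(V u + η) := sqrt_le_sqrt (by linarith)
    rw [div_le_iff₀ (by have := sqrt_pos.2 (hpos u hu); positivity)]
    nlinarith [bound u hu, mul_le_mul_of_nonneg_left hV_le hD,
      mul_le_mul_of_nonneg_left hη_le (mul_nonneg ha.le (sqrt_nonneg η))]
  have hlim : Tendsto (fun η => √(V 0 + η) * exp (-a * t) + (a * √η + D) / a) (𝓝[>] 0)
      (𝓝 (√(V 0) * exp (-a * t) + D / a)) := by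
    have hcont : ContinuousAt (fun η => √(V 0 + η) * exp (-a * t) + (a * √η + D) / a) 0 := by
      fun_prop
    simpa using hcont.tendsto.mono_left nhdsWithin_le_nhds
  refine ge_of_tendsto hlim ?_
  filter_upwards [self_mem_nhdsWithin] with η hη
  exact (sqrt_le_sqrt (by linarith [mem_Ioi.1 hη])).trans (hregular η hη)

theorem two_mul_mul_mul_le_of_sq_le_mul {p q s x y : ℝ} (hp : 0 < p) (hs : s ^ 2 ≤ p * q) :
    2 * s * x * y ≤ p * x ^ 2 + q * y ^ 2 := by
  nlinarith [sq_nonneg (p * x - s * y), mul_nonneg (sub_nonneg.2 hs) (sq_nonneg y)]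

theorem mul_add_mul_add_mul_le_sqrt_mul_sqrt (a₁ a₂ a₃ b₁ b₂ b₃ : ℝ) :
    a₁ * b₁ + a₂ * b₂ + a₃ * b₃ ≤ √(a₁ ^ 2 + a₂ ^ 2 + a₃ ^ 2) * √(b₁ ^ 2 + b₂ ^ 2 + b₃ ^ 2) := by
  simpa [Fin.sum_univ_three, add_assoc] using
    sum_mul_le_sqrt_mul_sqrt Finset.univ ![a₁, a₂, a₃] ![b₁, b₂, b₃]

theorem exists_lorenz_decay_rate {σ β lam : ℝ} (hσ : 0 < σ) (hβ : 0 < β) (hlam0 : 0 < lam)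
    (hlam1 : lam < 1) :
    ∃ a > 0, a ≤ β ∧ a < σ ∧ (1 - lam) * σ ≤ (σ - a) * (1 - a) := by
  set a := min β (lam * σ / (1 + σ))
  have hgain : a * (1 + σ) ≤ lam * σ := (le_div_iff₀ (by positivity)).1 (min_le_right _ _)
  refine ⟨a, lt_min hβ (by positivity), min_le_left _ _, by nlinarith, by nlinarith [sq_nonneg a]⟩

theorem lorenz_dissipation_le {σ β s a : ℝ} (haσ : a < σ) (haβ : a ≤ β)
    (hs : s ^ 2 ≤ (σ - a) * (1 - a)) (e₁ e₂ e₃ : ℝ) :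
    -σ * e₁ ^ 2 - e₂ ^ 2 - β * e₃ ^ 2 + 2 * s * e₁ * e₂ ≤ -a * (e₁ ^ 2 + e₂ ^ 2 + e₃ ^ 2) := by
  have hcross := two_mul_mul_mul_le_of_sq_le_mul (x := e₁) (y := e₂) (sub_pos.2 haσ) hs
  nlinarith [mul_nonneg (sub_nonneg.2 haβ) (sq_nonneg e₃)]

theorem lorenz_error_sq_hasDerivAt {σ β ρ s t : ℝ} {x₁ y₁ z₁ x₂ y₂ z₂ d₁ d₂ d₃ : ℝ → ℝ}
    (hx₁ : HasDerivAt x₁ (σ * (y₁ t - x₁ t) + d₁ t) t)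
    (hy₁ : HasDerivAt y₁ (x₁ t * (ρ - z₁ t) - y₁ t + d₂ t) t)
    (hz₁ : HasDerivAt z₁ (x₁ t * y₁ t - β * z₁ t + d₃ t) t)
    (hx₂ : HasDerivAt x₂ (σ * (y₂ t - x₂ t)) t)
    (hy₂ : HasDerivAt y₂ (x₂ t * (ρ - z₂ t) - y₂ t + (ρ + σ - 2 * s - z₂ t) * (x₁ t - x₂ t)) t)
    (hz₂ : HasDerivAt z₂ (x₂ t * y₂ t - β * z₂ t + y₂ t * (x₁ t - x₂ t)) t) :
    HasDerivAt (fun t => (x₁ t - x₂ t) ^ 2 + (y₁ t - y₂ t) ^ 2 + (z₁ t - z₂ t) ^ 2)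
      (2 * (-σ * (x₁ t - x₂ t) ^ 2 - (y₁ t - y₂ t) ^ 2 - β * (z₁ t - z₂ t) ^ 2
        + 2 * s * (x₁ t - x₂ t) * (y₁ t - y₂ t)
        + ((x₁ t - x₂ t) * d₁ t + (y₁ t - y₂ t) * d₂ t + (z₁ t - z₂ t) * d₃ t))) t := by
  refine ((((hx₁.sub hx₂).pow 2).add ((hy₁.sub hy₂).pow 2)).add
    ((hz₁.sub hz₂).pow 2)).congr_deriv ?_
  simp only [Pi.sub_apply]
  ring

/-- **Input-to-state stability of the cancellation-controlled Lorenz synchronization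
error**: there are constants `c, K > 0`, depending only on `σ`, `β`, `λ`, such that for
every `ρ > 0`, every master–slave pair of Lorenz systems with the cancellation control
`u₁ = (ρ + σ − 2√((1−λ)σ) − z₂) e₁`, `u₂ = y₂ e₁`, and every disturbance bound `D` with
`√(d₁² + d₂² + d₃²) ≤ D` on `[0,∞)`, the synchronization error satisfies
`‖e(t)‖ ≤ ‖e(0)‖ e^{−c t} + K D` for all `t ≥ 0`. -/
theorem lorenz_cancellation_iss
    (σ β lam : ℝ) (hσ : 0 < σ) (hβ : 0 < β) (hlam0 : 0 < lam) (hlam1 : lam < 1) :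
    ∃ c > (0:ℝ), ∃ K > (0:ℝ), ∀ ρ : ℝ, 0 < ρ →
      ∀ x₁ y₁ z₁ x₂ y₂ z₂ d₁ d₂ d₃ : ℝ → ℝ,
        (∀ t : ℝ, HasDerivAt x₁ (σ * (y₁ t - x₁ t) + d₁ t) t) →
        (∀ t : ℝ, HasDerivAt y₁ (x₁ t * (ρ - z₁ t) - y₁ t + d₂ t) t) →
        (∀ t : ℝ, HasDerivAt z₁ (x₁ t * y₁ t - β * z₁ t + d₃ t) t) →
        (∀ t : ℝ, HasDerivAt x₂ (σ * (y₂ t - x₂ t)) t) →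
        (∀ t : ℝ, HasDerivAt y₂ (x₂ t * (ρ - z₂ t) - y₂ t +
          (ρ + σ - 2 * Real.sqrt ((1 - lam) * σ) - z₂ t) * (x₁ t - x₂ t)) t) →
        (∀ t : ℝ, HasDerivAt z₂ (x₂ t * y₂ t - β * z₂ t + y₂ t * (x₁ t - x₂ t)) t) →
        ∀ D : ℝ,
          (∀ t ≥ (0:ℝ), Real.sqrt (d₁ t ^ 2 + d₂ t ^ 2 + d₃ t ^ 2) ≤ D) →
          ∀ t ≥ (0:ℝ),
            Real.sqrt ((x₁ t - x₂ t) ^ 2 + (y₁ t - y₂ t) ^ 2 + (z₁ t - z₂ t) ^ 2) ≤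
              Real.sqrt ((x₁ 0 - x₂ 0) ^ 2 + (y₁ 0 - y₂ 0) ^ 2 + (z₁ 0 - z₂ 0) ^ 2)
                * Real.exp (-c * t) + K * D := by
  obtain ⟨a, ha, haβ, haσ, hrate⟩ := exists_lorenz_decay_rate hσ hβ hlam0 hlam1
  refine ⟨a, ha, 1 / a, one_div_pos.2 ha, ?_⟩
  intro ρ _ x₁ y₁ z₁ x₂ y₂ z₂ d₁ d₂ d₃ hx₁ hy₁ hz₁ hx₂ hy₂ hz₂ D hD t ht
  have hs : √((1 - lam) * σ) ^ 2 ≤ (σ - a) * (1 - a) := by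
    rwa [sq_sqrt (mul_nonneg (sub_nonneg.2 hlam1.le) hσ.le)]
  rw [one_div_mul_eq_div]
  refine sqrt_le_of_hasDerivAt_le ha ((sqrt_nonneg _).trans (hD 0 le_rfl))
    (fun u _ => by positivity)
    (fun u _ => lorenz_error_sq_hasDerivAt (hx₁ u) (hy₁ u) (hz₁ u) (hx₂ u) (hy₂ u) (hz₂ u))
    (fun u hu => ?_) ht
  have hdissipation := lorenz_dissipation_le haσ haβ hs (x₁ u - x₂ u) (y₁ u - y₂ u) (z₁ u - z₂ u)
  have hforcing := (mul_add_mul_add_mul_le_sqrt_mul_sqrt (x₁ u - x₂ u) (y₁ u - y₂ u)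
    (z₁ u - z₂ u) (d₁ u) (d₂ u) (d₃ u)).trans (mul_le_mul_of_nonneg_left (hD u hu) (sqrt_nonneg _))
  linarith
end
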